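/- arXiv:1305.2523 — 6 statements merged into one kernel-verified Lean document; each statement's English description precedes it below -/
import Mathlib

section
/- Let λ ∈ P⁺ be such that λ = Σ_{i∈I} d_i s_i ω_i for some non-negative integers s_i, where d_i = 2/(α_i,α_i). Then for every positive root α ∈ R⁺ there exists s_α ∈ ℤ≥0 such that λ(h_α) = d_α s_α. Moreover, if α = β + γ for positive roots β, γ ∈ R⁺, then s_α = s_β + s_γ. -/
open scoped RealInnerProductSpace

/-- Lemma `dalpha`.  Let `𝔤` be a finite-dimensional simple complex Lie
algebra, whose root system `R` (with set of positive roots `R⁺`, simple roots `α_i` and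
fundamental weights `ω_i`, `i ∈ I`) is realised in the real inner product space spanned by the
roots, the invariant form being normalized so that long roots have squared length `2`.  Here
`d_α = 2/(α,α)` and the coroot pairing is `μ(h_α) = d_α (μ, α)`, so that the characterizing
property `(ω_i, d_j α_j) = δ_{i,j}` of the fundamental weights reads
`d_j (ω_i, α_j) = δ_{i,j}`.  Suppose `λ = Σ_{i∈I} d_i s_i ω_i` with `s_i ∈ ℤ≥0`.  Then for
every positive root `α ∈ R⁺` there exists `s_α ∈ ℤ≥0` with `λ(h_α) = d_α s_α`; moreover if
`α = β + γ` with `β, γ ∈ R⁺` then `s_α = s_β + s_γ`. -/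
theorem exists_sAlpha_of_dominant_weight
    {E : Type} [NormedAddCommGroup E] [InnerProductSpace ℝ E]
    {ι : Type} [Fintype ι] [DecidableEq ι]
    (R Rpos : Set E) (hfin : R.Finite) (hzero : (0 : E) ∉ R) (hposR : Rpos ⊆ R)
    -- crystallographic integrality and normalization (long roots have squared length `2`)
    (hcrys : ∀ α ∈ R, ∀ x ∈ R, ∃ n : ℤ, 2 * ⟪x, α⟫ / ⟪α, α⟫ = (n : ℝ))
    (hnorm : ∀ α ∈ R, ⟪α, α⟫ ≤ 2)
    -- the simple roots: linearly independent positive roots of which every positive root is a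
    -- non-negative integral combination, and such that every positive root is either simple or
    -- a sum of two positive roots
    (sroot : ι → E) (hsimple : ∀ i, sroot i ∈ Rpos)
    (hind : LinearIndependent ℝ sroot)
    (hcomb : ∀ α ∈ Rpos, ∃ c : ι → ℕ, α = ∑ i, (c i : ℝ) • sroot i)
    (hdecomp : ∀ α ∈ Rpos, (∃ i, α = sroot i) ∨ ∃ β ∈ Rpos, ∃ γ ∈ Rpos, α = β + γ)
    -- the fundamental weights: `d_j (ω_i, α_j) = δ_{i,j}`
    (ω : ι → E)
    (hω : ∀ i j, (2 / ⟪sroot j, sroot j⟫) * ⟪ω i, sroot j⟫ = if i = j then (1 : ℝ) else 0)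
    -- `λ = Σ_i d_i s_i ω_i` with `s_i ∈ ℤ≥0`
    (s : ι → ℕ) (lam : E)
    (hlam : lam = ∑ i, ((2 / ⟪sroot i, sroot i⟫) * (s i : ℝ)) • ω i) :
    ∃ S : E → ℕ,
      (∀ α ∈ Rpos, (2 / ⟪α, α⟫) * ⟪lam, α⟫ = (2 / ⟪α, α⟫) * (S α : ℝ)) ∧
      (∀ α β γ : E, α ∈ Rpos → β ∈ Rpos → γ ∈ Rpos → α = β + γ → S α = S β + S γ) := by

  classical
  have hpos : ∀ α ∈ Rpos, (0:ℝ) < ⟪α, α⟫ := by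
    intro α hα
    have hR := hposR hα
    have hne : α ≠ 0 := fun h => hzero (h ▸ hR)
    exact lt_of_le_of_ne real_inner_self_nonneg (fun h => hne (inner_self_eq_zero.mp h.symm))
  have key : ∀ j, ⟪lam, sroot j⟫ = (s j : ℝ) := by
    intro j
    have hq := hpos _ (hsimple j)
    rw [hlam, sum_inner]
    rw [Finset.sum_eq_single j]
    · rw [real_inner_smul_left]
      have h := hω j j
      rw [if_pos rfl] at h
      calc (2 / ⟪sroot j, sroot j⟫ * (s j : ℝ)) * ⟪ω j, sroot j⟫
          = (s j : ℝ) * ((2 / ⟪sroot j, sroot j⟫) * ⟪ω j, sroot j⟫) := by ring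
        _ = (s j : ℝ) := by rw [h]; ring
    · intro i _ hij
      rw [real_inner_smul_left]
      have h := hω i j
      rw [if_neg hij] at h
      have hd : (2 / ⟪sroot j, sroot j⟫) ≠ 0 := by positivity
      have : ⟪ω i, sroot j⟫ = 0 := by
        rcases mul_eq_zero.mp h with h' | h'
        · exact absurd h' hd
        · exact h'
      rw [this]; ring
    · intro h; exact absurd (Finset.mem_univ j) h
  have inner_eq : ∀ α (hα : α ∈ Rpos),
      ⟪lam, α⟫ = ((∑ i, (hcomb α hα).choose i * s i : ℕ) : ℝ) := by
    intro α hα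
    have hc := (hcomb α hα).choose_spec
    conv_lhs => rw [hc]
    rw [inner_sum]
    push_cast
    refine Finset.sum_congr rfl fun i _ => ?_
    rw [real_inner_smul_right, key]
  refine ⟨fun α => if h : α ∈ Rpos then ∑ i, (hcomb α h).choose i * s i else 0, ?_, ?_⟩
  · intro α hα
    simp only [dif_pos hα]
    rw [← inner_eq α hα]
  · intro α β γ hα hβ hγ habc
    have : ((if h : α ∈ Rpos then ∑ i, (hcomb α h).choose i * s i else 0 : ℕ) : ℝ)
        = ((if h : β ∈ Rpos then ∑ i, (hcomb β h).choose i * s i else 0 : ℕ) : ℝ)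
        + ((if h : γ ∈ Rpos then ∑ i, (hcomb γ h).choose i * s i else 0 : ℕ) : ℝ) := by
      simp only [dif_pos hα, dif_pos hβ, dif_pos hγ]
      rw [← inner_eq α hα, ← inner_eq β hβ, ← inner_eq γ hγ, habc, inner_add_right]
    exact_mod_cast this
end

section
/- Fix integers r, s, k ≥ 1 and K ≥ 0 with s + r ≥ kr + K. In the polynomial ring ℂ[y_0, y_1, y_2, …] one has X(r,s) = _kX(r,s) + Σ X(r−r′, s−s′)_k · _kX(r′, s′), where the sum is over all pairs (r′, s′) of non-negative integers with r′ < r, s′ ≤ s, and s′ + r′ ≥ kr′ + K. -/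
noncomputable section

/-- The set `S(r,s)` of finitely supported sequences `(b_p)_{p≥0}` of non-negative integers
with `Σ_p b_p = r` and `Σ_p p·b_p = s`. -/
def Sset (r s : ℕ) : Set (ℕ →₀ ℕ) :=
  {b | (b.sum fun _ m => m) = r ∧ (b.sum fun p m => p * m) = s}

/-- The monomial `Π_p y_p^{b_p}/b_p!` in `ℂ[y_0, y_1, y_2, …]`. -/
def Xterm (b : ℕ →₀ ℕ) : MvPolynomial ℕ ℂ :=
  b.prod fun p m => (m.factorial : ℂ)⁻¹ • MvPolynomial.X p ^ m

/-- `X(r,s) = Σ_{(b_p) ∈ S(r,s)} Π_p y_p^{b_p}/b_p!`. -/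
def Xfull (r s : ℕ) : MvPolynomial ℕ ℂ := ∑ᶠ b ∈ Sset r s, Xterm b

/-- `X(r,s)_k`: as `X(r,s)`, but summing only over those `(b_p) ∈ S(r,s)` with `b_p = 0` for
all `p ≥ k`. -/
def Xlow (k r s : ℕ) : MvPolynomial ℕ ℂ :=
  ∑ᶠ b ∈ {b ∈ Sset r s | ∀ p, k ≤ p → b p = 0}, Xterm b

/-- `_kX(r,s)`: as `X(r,s)`, but summing only over those `(b_p) ∈ S(r,s)` with `b_p = 0` for
all `p < k`. -/
def Xhigh (k r s : ℕ) : MvPolynomial ℕ ℂ :=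
  ∑ᶠ b ∈ {b ∈ Sset r s | ∀ p, p < k → b p = 0}, Xterm b

lemma Sset_finite (r s : ℕ) : (Sset r s).Finite := by
  apply Set.Finite.subset (Set.finite_Iic (∑ p ∈ Finset.range (s+1), Finsupp.single p r))
  rintro b ⟨h1, h2⟩
  intro p
  have hfp : (∑ q ∈ Finset.range (s+1), Finsupp.single q r) p
      = if p ∈ Finset.range (s+1) then r else 0 := by
    rw [Finset.sum_apply']
    simp [Finsupp.single_apply, Finset.sum_ite_eq]
  rw [hfp]
  by_cases hp : b p = 0
  · simp [hp]
  have hmem : p ∈ b.support := Finsupp.mem_support_iff.mpr hp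
  have hble : b p ≤ r := by
    rw [← h1, Finsupp.sum]
    exact Finset.single_le_sum (fun i _ => Nat.zero_le _) hmem
  have hps : p ≤ s := by
    have : p * b p ≤ s := by
      rw [← h2, Finsupp.sum]
      exact Finset.single_le_sum (f := fun a => a * b a) (fun i _ => Nat.zero_le _) hmem
    calc p ≤ p * b p := Nat.le_mul_of_pos_right p (Nat.pos_of_ne_zero hp)
    _ ≤ s := this
  simp [Finset.mem_range, Nat.lt_succ_iff, hps, hble]

lemma Xterm_add_of_disjoint {c d : ℕ →₀ ℕ} (h : Disjoint c.support d.support) :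
    Xterm (c + d) = Xterm c * Xterm d :=
  Finsupp.prod_add_index_of_disjoint h _

lemma sum_filter_split (b : ℕ →₀ ℕ) (P : ℕ → Prop) [DecidablePred P] (g : ℕ → ℕ → ℕ) :
    (b.filter P).sum g + (b.filter fun p => ¬ P p).sum g = b.sum g := by
  conv_rhs => rw [← Finsupp.filter_pos_add_filter_neg b P]
  rw [Finsupp.sum_add_index_of_disjoint]
  simp only [Finsupp.support_filter]
  exact Finset.disjoint_filter_filter_not _ _ _

/-- Lemma `rearrange`.  Fix integers `r, s, k ≥ 1` and `K ≥ 0` with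
`s + r ≥ kr + K`.  In `ℂ[y_0, y_1, y_2, …]` one has
`X(r,s) = _kX(r,s) + Σ X(r−r′, s−s′)_k · _kX(r′,s′)`, the sum being over all pairs
`(r′, s′)` of non-negative integers with `r′ < r`, `s′ ≤ s` and `s′ + r′ ≥ kr′ + K`. -/
theorem Xfull_eq_Xhigh_add_sum
    (r s k K : ℕ) (hr : 1 ≤ r) (hs : 1 ≤ s) (hk : 1 ≤ k) (h : k * r + K ≤ s + r) :
    Xfull r s =
      Xhigh k r s +
        ∑ᶠ q ∈ {q : ℕ × ℕ | q.1 < r ∧ q.2 ≤ s ∧ k * q.1 + K ≤ q.2 + q.1},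
          Xlow k (r - q.1) (s - q.2) * Xhigh k q.1 q.2 := by
  classical
  -- finiteness
  have hTfin : ({q : ℕ × ℕ | q.1 < r ∧ q.2 ≤ s ∧ k * q.1 + K ≤ q.2 + q.1}).Finite := by
    apply Set.Finite.subset (Set.finite_Iic (r, s))
    rintro ⟨r', s'⟩ ⟨h1, h2, _⟩
    exact ⟨h1.le, h2⟩
  have hAfin : ∀ r' s', ({b ∈ Sset r' s' | ∀ p, p < k → b p = 0}).Finite :=
    fun r' s' => (Sset_finite r' s').subset (fun b hb => hb.1)
  have hLfin : ∀ r' s', ({b ∈ Sset r' s' | ∀ p, k ≤ p → b p = 0}).Finite :=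
    fun r' s' => (Sset_finite r' s').subset (fun b hb => hb.1)
  have XhighEq : ∀ r' s', Xhigh k r' s' = ∑ b ∈ (hAfin r' s').toFinset, Xterm b :=
    fun r' s' => finsum_mem_eq_finite_toFinset_sum _ _
  have XlowEq : ∀ r' s', Xlow k r' s' = ∑ b ∈ (hLfin r' s').toFinset, Xterm b :=
    fun r' s' => finsum_mem_eq_finite_toFinset_sum _ _
  rw [Xfull, finsum_mem_eq_finite_toFinset_sum _ (Sset_finite r s),
    finsum_mem_eq_finite_toFinset_sum _ hTfin, XhighEq]
  simp only [XhighEq, XlowEq]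
  -- split the full sum according to whether the low part vanishes
  rw [← Finset.sum_filter_add_sum_filter_not (Sset_finite r s).toFinset
    (fun b => ∀ p, p < k → b p = 0) Xterm]
  congr 1
  · apply Finset.sum_congr _ (fun _ _ => rfl)
    ext b
    simp only [Finset.mem_filter, Set.Finite.mem_toFinset, Set.mem_setOf_eq]
  -- the rest: fiber over (r', s')
  set B := (Sset_finite r s).toFinset.filter (fun b => ¬ ∀ p, p < k → b p = 0) with hB
  set g : (ℕ →₀ ℕ) → ℕ × ℕ := fun b =>
    ((b.filter fun p => ¬ p < k).sum fun _ m => m,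
     (b.filter fun p => ¬ p < k).sum fun p m => p * m) with hg
  have hmaps : ∀ b ∈ B, g b ∈ hTfin.toFinset := by
    intro b hb
    rw [hB, Finset.mem_filter, Set.Finite.mem_toFinset] at hb
    obtain ⟨⟨hb1, hb2⟩, hb3⟩ := hb
    push_neg at hb3
    obtain ⟨p₀, hp₀k, hp₀⟩ := hb3
    set c := b.filter (fun p => p < k) with hc
    set d := b.filter (fun p => ¬ p < k) with hd
    have hsplit1 : (c.sum fun _ m => m) + (d.sum fun _ m => m) = r := by
      rw [hc, hd, sum_filter_split]; exact hb1
    have hsplit2 : (c.sum fun p m => p * m) + (d.sum fun p m => p * m) = s := by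
      rw [hc, hd, sum_filter_split]; exact hb2
    have hcp₀ : c p₀ = b p₀ := by
      rw [hc, Finsupp.filter_apply, if_pos hp₀k]
    have hrl1 : 1 ≤ c.sum fun _ m => m := by
      have hmem : p₀ ∈ c.support := by
        rw [Finsupp.mem_support_iff, hcp₀]; exact hp₀
      calc 1 ≤ c p₀ := Nat.one_le_iff_ne_zero.mpr (hcp₀ ▸ hp₀)
      _ ≤ c.sum fun _ m => m := by
          rw [Finsupp.sum]
          exact Finset.single_le_sum (fun i _ => Nat.zero_le _) hmem
    have hslbound : (c.sum fun p m => p * m) + (c.sum fun _ m => m)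
        ≤ k * (c.sum fun _ m => m) := by
      rw [Finsupp.sum, Finsupp.sum, ← Finset.sum_add_distrib, Finset.mul_sum]
      apply Finset.sum_le_sum
      intro p hp
      have hpk : p < k := by
        have := Finsupp.support_filter (p := fun p => p < k) (f := b) ▸ (hc ▸ hp)
        exact (Finset.mem_filter.mp this).2
      have : p + 1 ≤ k := hpk
      calc p * c p + c p = (p + 1) * c p := by ring
      _ ≤ k * c p := Nat.mul_le_mul_right _ this
    rw [Set.Finite.mem_toFinset]
    set rl := c.sum fun _ m => m
    set sl := c.sum fun p m => p * m
    refine ⟨?_, ?_, ?_⟩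
    · show (d.sum fun _ m => m) < r; omega
    · show (d.sum fun p m => p * m) ≤ s; omega
    · show k * (d.sum fun _ m => m) + K ≤ (d.sum fun p m => p * m) + (d.sum fun _ m => m)
      set r' := d.sum fun _ m => m
      set s' := d.sum fun p m => p * m
      have key : k * r' + K + (sl + rl) ≤ s' + r' + (sl + rl) := by
        calc k * r' + K + (sl + rl) ≤ k * r' + K + k * rl := by
              exact Nat.add_le_add_left hslbound _
        _ = k * r + K := by rw [← hsplit1]; ring
        _ ≤ s + r := h
        _ = s' + r' + (sl + rl) := by omega
      omega
  rw [← Finset.sum_fiberwise_of_maps_to hmaps Xterm]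
  apply Finset.sum_congr rfl
  intro q hq
  rw [Set.Finite.mem_toFinset] at hq
  obtain ⟨hq1, hq2, hq3⟩ := hq
  rw [Finset.sum_mul_sum, ← Finset.sum_product']
  apply Finset.sum_nbij' (fun b => (b.filter (fun p => p < k), b.filter (fun p => ¬ p < k)))
    (fun p => p.1 + p.2)
  · -- forward membership
    intro b hb
    rw [Finset.mem_filter, hB, Finset.mem_filter, Set.Finite.mem_toFinset] at hb
    obtain ⟨⟨⟨hb1, hb2⟩, hb3⟩, hbq⟩ := hb
    have hd1 : ((b.filter fun p => ¬ p < k).sum fun _ m => m) = q.1 := congrArg Prod.fst hbq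
    have hd2 : ((b.filter fun p => ¬ p < k).sum fun p m => p * m) = q.2 := congrArg Prod.snd hbq
    have hsplit1 := sum_filter_split b (fun p => p < k) (fun _ m => m)
    have hsplit2 := sum_filter_split b (fun p => p < k) (fun p m => p * m)
    rw [Finset.mem_product]
    dsimp only
    constructor
    · rw [Set.Finite.mem_toFinset]
      refine ⟨⟨?_, ?_⟩, ?_⟩
      · omega
      · omega
      · intro p hp
        rw [Finsupp.filter_apply, if_neg (by omega)]
    · rw [Set.Finite.mem_toFinset]
      refine ⟨⟨hd1, hd2⟩, ?_⟩
      intro p hp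
      rw [Finsupp.filter_apply, if_neg (by omega)]
  · -- backward membership
    rintro ⟨c, d⟩ hcd
    dsimp only
    rw [Finset.mem_product, Set.Finite.mem_toFinset, Set.Finite.mem_toFinset] at hcd
    obtain ⟨⟨⟨hc1, hc2⟩, hc3⟩, ⟨hd1, hd2⟩, hd3⟩ := hcd
    dsimp only at hc1 hc2 hc3 hd1 hd2 hd3
    have hdisj : Disjoint c.support d.support := by
      rw [Finset.disjoint_left]
      intro p hpc hpd
      rw [Finsupp.mem_support_iff] at hpc hpd
      by_cases hpk : p < k
      · exact hpd (hd3 p hpk)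
      · exact hpc (hc3 p (by omega))
    have hsum1 : ((c + d).sum fun _ m => m) = r := by
      rw [Finsupp.sum_add_index' (fun _ => rfl) (fun _ _ _ => rfl), hc1, hd1]; omega
    have hsum2 : ((c + d).sum fun p m => p * m) = s := by
      rw [Finsupp.sum_add_index' (fun p => by simp) (fun p m n => by ring), hc2, hd2]; omega
    have hfc : (c.filter fun p => ¬ p < k) = 0 := by
      ext p
      simp only [Finsupp.filter_apply, Finsupp.coe_zero, Pi.zero_apply]
      by_cases hpk : p < k
      · rw [if_neg (by simpa using hpk)]
      · rw [if_pos (by simpa using hpk), hc3 p (by omega)]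
    have hfd : (d.filter fun p => ¬ p < k) = d := by
      ext p
      simp only [Finsupp.filter_apply]
      by_cases hpk : p < k
      · rw [if_neg (by simpa using hpk), hd3 p hpk]
      · rw [if_pos (by simpa using hpk)]
    rw [Finset.mem_filter, hB, Finset.mem_filter, Set.Finite.mem_toFinset]
    refine ⟨⟨⟨hsum1, hsum2⟩, ?_⟩, ?_⟩
    · -- low part nonzero
      intro hall
      have hc0 : c = 0 := by
        ext p
        simp only [Finsupp.coe_zero, Pi.zero_apply]
        by_cases hpk : p < k
        · have := hall p hpk
          rw [Finsupp.add_apply] at this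
          omega
        · exact hc3 p (by omega)
      rw [hc0] at hc1
      simp [Finsupp.sum_zero_index] at hc1
      omega
    · rw [hg]
      simp only [Finsupp.filter_add, hfc, hfd, zero_add]
      exact Prod.ext hd1 hd2
  · -- left inverse
    intro b _
    exact Finsupp.filter_pos_add_filter_neg b _
  · -- right inverse
    rintro ⟨c, d⟩ hcd
    dsimp only
    rw [Finset.mem_product, Set.Finite.mem_toFinset, Set.Finite.mem_toFinset] at hcd
    obtain ⟨⟨⟨hc1, hc2⟩, hc3⟩, ⟨hd1, hd2⟩, hd3⟩ := hcd
    dsimp only at hc1 hc2 hc3 hd1 hd2 hd3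
    have hfc : ((c + d).filter fun p => p < k) = c := by
      ext p
      simp only [Finsupp.filter_apply, Finsupp.add_apply]
      by_cases hpk : p < k
      · rw [if_pos hpk, hd3 p hpk, add_zero]
      · rw [if_neg hpk, hc3 p (by omega)]
    have hfd : ((c + d).filter fun p => ¬ p < k) = d := by
      ext p
      simp only [Finsupp.filter_apply, Finsupp.add_apply]
      by_cases hpk : p < k
      · rw [if_neg (by simpa using hpk), hd3 p hpk]
      · rw [if_pos (by simpa using hpk), hc3 p (by omega), zero_add]
    exact Prod.ext hfc hfd
  · -- values agree
    intro b _
    conv_lhs => rw [← Finsupp.filter_pos_add_filter_neg b (fun p => p < k)]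
    apply Xterm_add_of_disjoint
    simp only [Finsupp.support_filter]
    exact Finset.disjoint_filter_filter_not _ _ _

end
end

section
/- Let V be a complex vector space, (T_p)_{p≥0} a family of pairwise commuting linear endomorphisms of V, v ∈ V, and K ∈ ℤ≥0. For r,s ∈ ℤ≥0 define X(r,s) = Σ_{(b_p)∈S(r,s)} ∏_p T_p^{b_p}/b_p! and, for k ≥ 1, _kX(r,s) the analogous sum over those (b_p) ∈ S(r,s) with b_p = 0 for all p < k. Then X(r,s)v = 0 for all r,s,k ≥ 1 with s + r ≥ 1 + kr + K if and only if _kX(r,s)v = 0 for all r,s,k ≥ 1 with s + r ≥ 1 + kr + K. -/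
noncomputable section

/-- The set of finitely supported sequences `(b_p)_{p≥0}` of non-negative integers with
`Σ_p b_p = r`, `Σ_p p·b_p = s` and `b_p = 0` for all `p < k` (for `k = 0` this is `S(r,s)`). -/
def kSset (k r s : ℕ) : Set (ℕ →₀ ℕ) :=
  {b | (b.sum fun _ m => m) = r ∧ (b.sum fun p m => p * m) = s ∧ ∀ p, p < k → b p = 0}

/-- The operator `Π_p T_p^{b_p}/b_p!` (the product taken in increasing order of `p`; for
`(b_p) ∈ S(r,s)` one has `b_p = 0` for `p > s`, so the product below over `p = 0, …, s`
agrees with the full product). -/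
def opTerm {V : Type} [AddCommGroup V] [Module ℂ V]
    (T : ℕ → Module.End ℂ V) (s : ℕ) (b : ℕ →₀ ℕ) : Module.End ℂ V :=
  ((List.range (s + 1)).map fun p => ((b p).factorial : ℂ)⁻¹ • T p ^ b p).prod

/-- The operator `_kX(r,s) = Σ_{(b_p) ∈ S(r,s), b_p = 0 for p < k} Π_p T_p^{b_p}/b_p!`;
for `k = 0` this is `X(r,s)`. -/
def opX {V : Type} [AddCommGroup V] [Module ℂ V]
    (T : ℕ → Module.End ℂ V) (k r s : ℕ) : Module.End ℂ V :=
  ∑ᶠ b ∈ kSset k r s, opTerm T s b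

/-!
If `b_p = 0` for `p < k`, the factor `T_k^{b_k}/b_k!` is the leftmost one of the ordered product,
so splitting it off gives `_kX(r,s) = Σ_j T_k^j/j! · _{k+1}X(r-j, s-jk)`. When `s > K + c·r` with
`k ≤ c`, every summand inherits the bound: `s - jk > K + c·(r-j)`. Hence, by strong induction on
`r`, `_kX` annihilates `v` in the region `s > K + c·r` iff `_{k+1}X` does. Chaining these
equivalences from `k = 0` (with `c` the level minus one) transports the vanishing of `X` to that
of every `_kX` and back.
-/

namespace kSset

open Finsupp

variable {k r s : ℕ} {b : ℕ →₀ ℕ}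

lemma mem_iff : b ∈ kSset k r s ↔ degree b = r ∧ weight id b = s ∧ ∀ p < k, b p = 0 := by
  have : (b.sum fun p m => p * m) = weight id b := sum_congr fun p _ => mul_comm p (b p)
  rw [← this]
  rfl

lemma apply_le (hb : b ∈ kSset k r s) (p : ℕ) : b p ≤ r :=
  (mem_iff.1 hb).1 ▸ le_degree p b

lemma le_of_apply_ne_zero (hb : b ∈ kSset k r s) {p : ℕ} (hp : b p ≠ 0) : p ≤ s :=
  (mem_iff.1 hb).2.1 ▸ le_weight_of_ne_zero' id hp

lemma apply_eq_zero_of_lt (hb : b ∈ kSset k r s) {p : ℕ} (hp : s < p) : b p = 0 := by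
  by_contra h
  exact (le_of_apply_ne_zero hb h).not_gt hp

lemma subset_finsuppAntidiag (k r s : ℕ) :
    kSset k r s ⊆ Finset.finsuppAntidiag (Finset.range (s + 1)) r := by
  intro b hb
  rw [Finset.mem_coe, Finset.mem_finsuppAntidiag]
  have hsupp : b.support ⊆ Finset.range (s + 1) := fun p hp => by
    by_contra h
    exact mem_support_iff.1 hp (apply_eq_zero_of_lt hb (by simpa using h))
  exact ⟨(Finset.sum_subset hsupp fun p _ hp => notMem_support_iff.1 hp).symm.trans hb.1, hsupp⟩

lemma finite (k r s : ℕ) : (kSset k r s).Finite :=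
  (Finset.finite_toSet _).subset (subset_finsuppAntidiag k r s)

lemma erase_mem (hb : b ∈ kSset k r s) : b.erase k ∈ kSset (k + 1) (r - b k) (s - b k * k) := by
  obtain ⟨hr, hs, hk⟩ := mem_iff.1 hb
  rw [← erase_add_single k b, map_add, degree_single] at hr
  rw [← erase_add_single k b, map_add, weight_single, id, smul_eq_mul] at hs
  refine mem_iff.2 ⟨by omega, by omega, fun p hp => ?_⟩
  rcases (Nat.lt_succ_iff.1 hp).lt_or_eq with hp | rfl
  · rw [erase_ne hp.ne, hk p hp]
  · exact erase_same

lemma add_single_mem {j : ℕ} (hj : j ≤ r) (hjk : j * k ≤ s)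
    (hb : b ∈ kSset (k + 1) (r - j) (s - j * k)) : b + single k j ∈ kSset k r s := by
  obtain ⟨hr, hs, hk⟩ := mem_iff.1 hb
  refine mem_iff.2 ⟨?_, ?_, fun p hp => ?_⟩
  · rw [map_add, degree_single]
    omega
  · rw [map_add, weight_single, id, smul_eq_mul]
    omega
  · simp [hk p (by omega), hp.ne']

lemma eq_empty_of_pos (k : ℕ) (hs : 0 < s) : kSset k 0 s = ∅ := by
  refine Set.eq_empty_of_forall_notMem fun b hb => ?_
  obtain ⟨hr, hs', -⟩ := mem_iff.1 hb
  rw [(degree_eq_zero_iff b).1 hr, map_zero] at hs'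
  omega

end kSset

lemma List.prod_map_range_eq_of_eq_one {M : Type*} [Monoid M] {g : ℕ → M} {m n : ℕ}
    (hmn : m ≤ n) (hg : ∀ p, m ≤ p → g p = 1) :
    ((List.range n).map g).prod = ((List.range m).map g).prod := by
  induction n, hmn using Nat.le_induction with
  | base => rfl
  | succ n hmn ih => rw [List.prod_range_succ, ih, hg n hmn, mul_one]

lemma List.prod_map_range_eq_mul {M : Type*} [Monoid M] {g h : ℕ → M} {k n : ℕ} (hkn : k < n)
    (hg : ∀ p < k, g p = 1) (hh : ∀ p ≤ k, h p = 1) (hgh : ∀ p, k < p → g p = h p) :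
    ((List.range n).map g).prod = g k * ((List.range n).map h).prod := by
  induction n, hkn using Nat.le_induction with
  | base =>
    rw [List.prod_range_succ, List.prod_range_succ, hh k le_rfl, mul_one,
      List.prod_eq_one (by simpa using hg),
      List.prod_eq_one (by simpa using fun p hp => hh p hp.le), one_mul, mul_one]
  | succ n hkn ih => rw [List.prod_range_succ, List.prod_range_succ, ih, hgh n hkn, mul_assoc]

section opTerm

variable {V : Type} [AddCommGroup V] [Module ℂ V] (T : ℕ → Module.End ℂ V)

lemma opTerm_eq_of_le {s s' : ℕ} {b : ℕ →₀ ℕ} (hs : s' ≤ s) (hb : ∀ p, s' < p → b p = 0) :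
    opTerm T s b = opTerm T s' b :=
  List.prod_map_range_eq_of_eq_one (by omega) fun p hp => by simp [hb p hp]

lemma opTerm_eq_mul_opTerm_erase {k r s : ℕ} {b : ℕ →₀ ℕ} (hb : b ∈ kSset k r s) :
    opTerm T s b = (((b k).factorial : ℂ)⁻¹ • T k ^ b k) * opTerm T s (b.erase k) := by
  rcases eq_or_ne (b k) 0 with h | h
  · rw [h, Finsupp.erase_of_notMem_support (by simpa using h)]
    simp
  refine List.prod_map_range_eq_mul (Nat.lt_succ_of_le (kSset.le_of_apply_ne_zero hb h))
    (fun p hp => by simp [hb.2.2 p hp]) ?_ fun p hp => by simp [Finsupp.erase_ne hp.ne']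
  intro p hp
  rcases hp.lt_or_eq with hp | rfl
  · simp [Finsupp.erase_ne hp.ne, hb.2.2 p hp]
  · simp

end opTerm

section opX

variable {V : Type} [AddCommGroup V] [Module ℂ V] (T : ℕ → Module.End ℂ V)

lemma opX_eq_sum (k r s : ℕ) :
    opX T k r s = ∑ b ∈ (kSset.finite k r s).toFinset, opTerm T s b := by
  rw [opX, ← finsum_mem_coe_finset, Set.Finite.coe_toFinset]

lemma opX_zero_left_of_pos (k : ℕ) {s : ℕ} (hs : 0 < s) : opX T k 0 s = 0 := by
  rw [opX, kSset.eq_empty_of_pos k hs, finsum_mem_empty]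

theorem opX_eq_sum_mul_opX_succ {k r s : ℕ} (hrs : r * k ≤ s) :
    opX T k r s = ∑ j ∈ Finset.range (r + 1),
      (((j.factorial : ℂ)⁻¹ • T k ^ j) * opX T (k + 1) (r - j) (s - j * k)) := by
  simp only [opX_eq_sum, Finset.mul_sum]
  rw [Finset.sum_sigma']
  refine Finset.sum_nbij' (fun b => ⟨b k, b.erase k⟩) (fun x => x.2 + Finsupp.single k x.1)
    ?_ ?_ ?_ ?_ ?_
  · intro b hb
    simp only [Finset.mem_sigma, Finset.mem_range, Set.Finite.mem_toFinset] at hb ⊢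
    exact ⟨Nat.lt_succ_of_le (kSset.apply_le hb k), kSset.erase_mem hb⟩
  · rintro ⟨j, b⟩ hb
    simp only [Finset.mem_sigma, Finset.mem_range, Set.Finite.mem_toFinset] at hb ⊢
    exact kSset.add_single_mem (by omega) ((Nat.mul_le_mul_right k (by omega)).trans hrs) hb.2
  · intro b _
    exact Finsupp.erase_add_single k b
  · rintro ⟨j, b⟩ hb
    simp only [Finset.mem_sigma, Set.Finite.mem_toFinset] at hb
    have hbk : b k = 0 := (kSset.mem_iff.1 hb.2).2.2 k k.lt_succ_self
    simp [hbk, Finsupp.erase_add, Finsupp.erase_of_notMem_support]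
  · intro b hb
    rw [Set.Finite.mem_toFinset] at hb
    rw [opTerm_eq_mul_opTerm_erase T hb,
      opTerm_eq_of_le T (Nat.sub_le s _) fun _ => kSset.apply_eq_zero_of_lt (kSset.erase_mem hb)]

end opX

section annihilation

variable {V : Type} [AddCommGroup V] [Module ℂ V]

def OpXAnnihilates (T : ℕ → Module.End ℂ V) (v : V) (K k c : ℕ) : Prop :=
  ∀ r s, K + c * r < s → opX T k r s v = 0

variable {T : ℕ → Module.End ℂ V} {v : V} {K k c : ℕ}

lemma opX_apply_eq_opX_succ_apply (hkc : k ≤ c) {r s : ℕ} (hs : K + c * r < s)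
    (h : ∀ r' < r, ∀ s', K + c * r' < s' → opX T (k + 1) r' s' v = 0) :
    opX T k r s v = opX T (k + 1) r s v := by
  have hrs : r * k ≤ s := (Nat.mul_le_mul_left r hkc).trans (by rw [mul_comm]; omega)
  rw [opX_eq_sum_mul_opX_succ T hrs, LinearMap.sum_apply, Finset.sum_range_succ',
    Finset.sum_eq_zero, zero_add]
  · simp
  intro j hj
  have hjr : j + 1 ≤ r := Finset.mem_range.1 hj
  have h1 : c * (r - (j + 1)) = c * r - c * (j + 1) := Nat.mul_sub c r (j + 1)
  have h2 : (j + 1) * k ≤ c * (j + 1) := by rw [mul_comm]; exact Nat.mul_le_mul_right _ hkc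
  have h3 : c * (j + 1) ≤ c * r := Nat.mul_le_mul_left c hjr
  rw [Module.End.mul_apply, h (r - (j + 1)) (by omega) _ (by omega), map_zero]

namespace OpXAnnihilates

lemma of_pos (h : ∀ r s, 0 < r → K + c * r < s → opX T k r s v = 0) :
    OpXAnnihilates T v K k c := by
  intro r s hs
  rcases r.eq_zero_or_pos with rfl | hr
  · rw [opX_zero_left_of_pos T k (by omega), LinearMap.zero_apply]
  · exact h r s hr hs

lemma mono (h : OpXAnnihilates T v K k c) {c' : ℕ} (hc : c ≤ c') : OpXAnnihilates T v K k c' :=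
  fun r s hs => h r s (lt_of_le_of_lt (by gcongr) hs)

lemma succ_iff (hkc : k ≤ c) : OpXAnnihilates T v K k c ↔ OpXAnnihilates T v K (k + 1) c := by
  constructor
  · intro h r
    induction r using Nat.strong_induction_on with
    | _ r ih =>
      intro s hs
      rw [← opX_apply_eq_opX_succ_apply hkc hs ih]
      exact h r s hs
  · intro h r s hs
    rw [opX_apply_eq_opX_succ_apply hkc hs fun r' _ => h r']
    exact h r s hs

lemma of_zero (h : OpXAnnihilates T v K 0 c) (hk : k ≤ c + 1) : OpXAnnihilates T v K k c := by
  induction k with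
  | zero => exact h
  | succ k ih => exact (succ_iff (by omega)).1 (ih (by omega))

end OpXAnnihilates

end annihilation

theorem opX_zero_iff_high_opX_zero_general
    {V : Type} [AddCommGroup V] [Module ℂ V]
    (T : ℕ → Module.End ℂ V)
    (v : V) (K : ℕ) :
    (∀ r s k : ℕ, 1 ≤ r → 1 ≤ s → 1 ≤ k → 1 + k * r + K ≤ s + r → opX T 0 r s v = 0) ↔
    (∀ r s k : ℕ, 1 ≤ r → 1 ≤ s → 1 ≤ k → 1 + k * r + K ≤ s + r → opX T k r s v = 0) := by
  have hX : (∀ r s k : ℕ, 1 ≤ r → 1 ≤ s → 1 ≤ k → 1 + k * r + K ≤ s + r → opX T 0 r s v = 0) ↔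
      OpXAnnihilates T v K 0 0 := by
    refine ⟨fun h => .of_pos fun r s hr hs => h r s 1 hr (by omega) le_rfl (by omega),
      fun h r s k _ _ hk hb => h r s ?_⟩
    have : r ≤ k * r := Nat.le_mul_of_pos_left r hk
    omega
  have hkX : (∀ r s k : ℕ, 1 ≤ r → 1 ≤ s → 1 ≤ k → 1 + k * r + K ≤ s + r → opX T k r s v = 0) ↔
      ∀ k, OpXAnnihilates T v K (k + 1) k := by
    refine ⟨fun h k => .of_pos fun r s hr hs => h r s (k + 1) hr (by omega) (by omega)
      (by rw [Nat.succ_mul]; omega), fun h r s k _ _ hk hb => ?_⟩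
    obtain ⟨k, rfl⟩ : ∃ k', k = k' + 1 := ⟨k - 1, by omega⟩
    exact h k r s (by rw [Nat.succ_mul] at hb; omega)
  rw [hX, hkX]
  exact ⟨fun h k => (h.mono (Nat.zero_le k)).of_zero le_rfl,
    fun h => (OpXAnnihilates.succ_iff le_rfl).2 (h 0)⟩

/-- Proposition `max`.  Let `V` be a complex vector space, `(T_p)_{p≥0}` a
family of pairwise commuting endomorphisms of `V`, `v ∈ V` and `K ∈ ℤ≥0`.  Then
`X(r,s)v = 0` for all `r, s, k ≥ 1` with `s + r ≥ 1 + kr + K` if and only if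
`_kX(r,s)v = 0` for all `r, s, k ≥ 1` with `s + r ≥ 1 + kr + K`. -/
theorem opX_zero_iff_high_opX_zero
    {V : Type} [AddCommGroup V] [Module ℂ V]
    (T : ℕ → Module.End ℂ V) (hT : ∀ p q, Commute (T p) (T q))
    (v : V) (K : ℕ) :
    (∀ r s k : ℕ, 1 ≤ r → 1 ≤ s → 1 ≤ k → 1 + k * r + K ≤ s + r → opX T 0 r s v = 0) ↔
    (∀ r s k : ℕ, 1 ≤ r → 1 ≤ s → 1 ≤ k → 1 + k * r + K ≤ s + r → opX T k r s v = 0) :=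
  opX_zero_iff_high_opX_zero_general T v K

end
end

section
/- Let λ ∈ P⁺ be nonzero and ξ = (ξ^α)_{α∈R⁺} a λ-compatible tuple of partitions. Then the submodule of W_loc(λ) generated by the elements (x_α⁺⊗t)^s (x_α⁻⊗1)^{s+r} w_λ, for α ∈ R⁺ and s,r ≥ 1 with s+r ≥ 1 + rk + Σ_{j≥k+1} ξ^α_j for some k ≥ 1, coincides with the submodule generated by the elements _k x_α⁻(r,s) w_λ for α ∈ R⁺ and r,s,k ≥ 1 with s+r ≥ 1 + kr + Σ_{j≥k+1} ξ^α_j; hence V(ξ) admits this second presentation. In particular, for all α ∈ R⁺ and r,k ≥ 1 with r ≥ 1 + Σ_{j≥k+1} ξ^α_j, one has (x_α⁻ ⊗ t^k)^r v_ξ = 0. -/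
open scoped TensorProduct
open Polynomial

noncomputable section

/-! ## The current algebra `𝔤[t] = ℂ[t] ⊗ 𝔤` and its universal enveloping algebra -/

variable (L : Type) [LieRing L] [LieAlgebra ℂ L]

/-- The current algebra `𝔤[t] = ℂ[t] ⊗ 𝔤` of a complex Lie algebra `𝔤`. -/
abbrev CurAlg := Polynomial ℂ ⊗[ℂ] L

instance : LieAlgebra ℂ (CurAlg L) where
  lie_smul c x y := by
    have h := lie_smul (algebraMap ℂ (Polynomial ℂ) c) x y
    rwa [algebraMap_smul, algebraMap_smul] at h

/-- The universal enveloping algebra `U(𝔤[t])`. -/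
abbrev UCA := UniversalEnvelopingAlgebra ℂ (CurAlg L)

attribute [local instance 100] LieRing.ofAssociativeRing

/-- The canonical embedding `𝔤[t] → U(𝔤[t])`. -/
abbrev ιU : CurAlg L →ₗ⁅ℂ⁆ UCA L := UniversalEnvelopingAlgebra.ι ℂ

variable {L}

/-- The element `x ⊗ t^s` of `U(𝔤[t])`. -/
abbrev xt (x : L) (s : ℕ) : UCA L := ιU L ((X ^ s : ℂ[X]) ⊗ₜ x)

/-- Divided power `u^{(q)} = u^q/q!`. -/
def dpow (u : UCA L) (q : ℕ) : UCA L := (q.factorial : ℂ)⁻¹ • u ^ q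

/-! ## Root data for `𝔤`, the local Weyl module and the modules `V(ξ)`.

`Φ` indexes the positive roots `R⁺`; `ep α`, `em α`, `hc α` are the elements
`x_α⁺ ∈ 𝔤_α`, `x_α⁻ ∈ 𝔤_{-α}` and the coroot `h_α`; `ιI` indexes the simple roots via
`simple : ιI → Φ`.  The functional `lam` is the weight `λ` and `lamNat α = λ(h_α) ∈ ℤ≥0`. -/

variable {Φ ιI : Type}

/-- The nilpotent subalgebra `𝔫⁺`, namely the span of the positive root vectors. -/
def posPart (ep : Φ → L) : Submodule ℂ L := Submodule.span ℂ (Set.range ep)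

/-- The Cartan subalgebra `𝔥`, namely the span of the coroots. -/
def cartan (hc : Φ → L) : Submodule ℂ L := Submodule.span ℂ (Set.range hc)

/-- The generators of the defining left ideal of the local Weyl module `W_loc(λ)`. -/
def weylGens (ep em hc : Φ → L) (simple : ιI → Φ) (lam : Module.Dual ℂ L)
    (lamNat : Φ → ℕ) : Set (UCA L) :=
  {u | ∃ x ∈ posPart ep, ∃ s : ℕ, u = xt x s} ∪
    {u | ∃ x ∈ cartan hc, ∃ s : ℕ, u = xt x s - (if s = 0 then lam x else 0) • 1} ∪
    {u | ∃ i : ιI, u = xt (em (simple i)) 0 ^ (lamNat (simple i) + 1)}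

/-- The local Weyl module `W_loc(λ)`, as quotient of `U(𝔤[t])` by the left ideal generated by
the elements `x ⊗ t^s` for `x ∈ 𝔫⁺`, `h ⊗ t^s − δ_{s,0}λ(h)·1` for `h ∈ 𝔥`, and
`(x_i⁻ ⊗ 1)^{λ(h_i)+1}` for `i ∈ I`. -/
abbrev Wloc (ep em hc : Φ → L) (simple : ιI → Φ) (lam : Module.Dual ℂ L) (lamNat : Φ → ℕ) :=
  (UCA L) ⧸ Submodule.span (UCA L) (weylGens ep em hc simple lam lamNat)

/-- The cyclic generator `w_λ` of `W_loc(λ)`, the image of `1`. -/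
def wLam (ep em hc : Φ → L) (simple : ιI → Φ) (lam : Module.Dual ℂ L) (lamNat : Φ → ℕ) :
    Wloc ep em hc simple lam lamNat := Submodule.Quotient.mk 1

/-- The sum `Σ_{j ≥ k+1} ξ_j` of the parts of a partition beyond the `k`-th one (the partition
being recorded as the function `p : ℕ → ℕ` of its parts in `0`-based indexing, `p j = ξ_{j+1}`). -/
def tailSum (p : ℕ → ℕ) (k : ℕ) : ℕ := ∑ᶠ j ∈ {j : ℕ | k ≤ j}, p j

/-- `ξ = (ξ^α)_{α ∈ R⁺}` is a `λ`-compatible tuple of partitions: each `ξ^α` is a partition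
(weakly decreasing, finitely many nonzero parts) with `|ξ^α| = λ(h_α)`. -/
def IsCompatible (lamNat : Φ → ℕ) (ξ : Φ → ℕ → ℕ) : Prop :=
  ∀ α, Antitone (ξ α) ∧ (∃ N, ∀ j, N ≤ j → ξ α j = 0) ∧ ∑ᶠ j, ξ α j = lamNat α

/-- The generators `(x_α⁺ ⊗ t)^s (x_α⁻ ⊗ 1)^{s+r} w_λ`, for `α ∈ R⁺` and `s, r ≥ 1` such that
`s + r ≥ 1 + rk + Σ_{j ≥ k+1} ξ^α_j` for some `k ≥ 1`, of the submodule of `W_loc(λ)` defining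
`V(ξ)`. -/
def xiGens (ep em hc : Φ → L) (simple : ιI → Φ) (lam : Module.Dual ℂ L) (lamNat : Φ → ℕ)
    (ξ : Φ → ℕ → ℕ) : Set (Wloc ep em hc simple lam lamNat) :=
  {v | ∃ (α : Φ) (s r : ℕ), 1 ≤ s ∧ 1 ≤ r ∧
        (∃ k, 1 ≤ k ∧ s + r ≥ 1 + r * k + tailSum (ξ α) k) ∧
        v = (xt (ep α) 1 ^ s * xt (em α) 0 ^ (s + r)) • wLam ep em hc simple lam lamNat}

/-- The module `V(ξ)`. -/
abbrev VXi (ep em hc : Φ → L) (simple : ιI → Φ) (lam : Module.Dual ℂ L) (lamNat : Φ → ℕ)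
    (ξ : Φ → ℕ → ℕ) :=
  Wloc ep em hc simple lam lamNat ⧸
    Submodule.span (UCA L) (xiGens ep em hc simple lam lamNat ξ)

/-- The cyclic generator `v_ξ` of `V(ξ)`, the image of `w_λ`. -/
def vXi (ep em hc : Φ → L) (simple : ιI → Φ) (lam : Module.Dual ℂ L) (lamNat : Φ → ℕ)
    (ξ : Φ → ℕ → ℕ) : VXi ep em hc simple lam lamNat ξ :=
  Submodule.Quotient.mk (wLam ep em hc simple lam lamNat)

/-- The set `_kS(r,s)` of finitely supported sequences `(b_p)_{p≥0}` of non-negative integers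
with `Σ_p b_p = r`, `Σ_p p·b_p = s` and `b_p = 0` for all `p < k`. -/
def kS (r s k : ℕ) : Set (ℕ →₀ ℕ) :=
  {b | (b.sum fun _ m => m) = r ∧ (b.sum fun p m => p * m) = s ∧ ∀ p < k, b p = 0}

/-- The element `_k x(r,s) = Σ_{(b_p) ∈ _kS(r,s)} (x⊗t^k)^{(b_k)} ⋯ (x⊗t^s)^{(b_s)}`
of `U(𝔤[t])` (note that `b_p = 0` for `p > s` whenever `_kS(r,s) ∋ b`, so the product below
over `p = 0, …, s` agrees with the product over the support of `b`). -/
def kx (x : L) (r s k : ℕ) : UCA L :=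
  ∑ᶠ b ∈ kS r s k, ((List.range (s + 1)).map fun p => dpow (xt x p) (b p)).prod

/-! Since the elements `x_α⁻ ⊗ t^p` commute, `_k x⁻(r,s)` is the coefficient of `u^r t^s` in
`exp (Σ_{p ≥ k} (x⁻ ⊗ t^p) u t^p)`, and splitting off the factor `exp ((x⁻ ⊗ t^k) u t^k)` writes
it as `Σ_j (x⁻ ⊗ t^k)^{(j)} · _{k+1}x⁻(r-j, s-jk)`. Garland's identity
`(x⁺ ⊗ t)^{(s)} (x⁻ ⊗ 1)^{(s+r)} w_λ = (-1)^s · _0x⁻(r,s) w_λ` identifies the first family of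
generators with the elements `_0x⁻(r,s) w_λ`. If `s + r ≥ 1 + k'r + Σ_{j>k'} ξ_j` and `k < k'`,
then every term `_{k+1}x⁻(r-j, s-jk)` of the splitting satisfies this inequality with `(r-j, s-jk)`
in place of `(r, s)`, so induction on `k` between `0` and `k'` puts each family of generators in
the span of the other.
Finally `(x⁻ ⊗ t^k)^r = r! · _k x⁻(r, kr)`, which is one of the second family of generators
once `r ≥ 1 + Σ_{j>k} ξ_j`.
-/

lemma xt_mul_sub_mul_xt (x y : L) (a b : ℕ) :
    xt x a * xt y b - xt y b * xt x a = xt ⁅x, y⁆ (a + b) := by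
  have h := (ιU L).map_lie (x := (X ^ a : ℂ[X]) ⊗ₜ[ℂ] x) (y := (X ^ b : ℂ[X]) ⊗ₜ[ℂ] y)
  rw [LieAlgebra.ExtendScalars.bracket_tmul, Ring.lie_def] at h
  rw [← h, ← pow_add]

lemma commute_xt (x : L) (a b : ℕ) : Commute (xt x a) (xt x b) := by
  have h := xt_mul_sub_mul_xt x x a b
  rw [lie_self, show xt (0 : L) (a + b) = 0 by simp, sub_eq_zero] at h
  exact h

lemma xt_smul (c : ℂ) (x : L) (a : ℕ) : xt (c • x) a = c • xt x a := by
  rw [xt, TensorProduct.tmul_smul, map_smul]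

namespace IsSl2Triple

variable {E F H : L}

lemma xt_e_mul_xt_f (t : IsSl2Triple H E F) (a b : ℕ) :
    xt E a * xt F b = xt F b * xt E a + xt H (a + b) := by
  rw [← t.lie_e_f, ← xt_mul_sub_mul_xt, add_sub_cancel]

lemma xt_h_mul_xt_f (t : IsSl2Triple H E F) (a b : ℕ) :
    xt H a * xt F b = xt F b * xt H a - (2 : ℂ) • xt F (a + b) := by
  have h := xt_mul_sub_mul_xt H F a b
  rw [t.lie_h_f_nsmul, ← Nat.cast_smul_eq_nsmul ℂ, ← neg_smul, xt_smul, sub_eq_iff_eq_add] at h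
  rw [h]
  push_cast
  module

end IsSl2Triple

@[simp] lemma dpow_zero (u : UCA L) : dpow u 0 = 1 := by simp [dpow]

lemma mul_dpow (u : UCA L) (j : ℕ) : u * dpow u j = ((j + 1 : ℂ)) • dpow u (j + 1) := by
  rw [dpow, dpow, smul_smul, Nat.factorial_succ, pow_succ', Nat.cast_mul, mul_inv, ← mul_assoc,
    Nat.cast_succ, mul_inv_cancel₀ (Nat.cast_add_one_ne_zero j), one_mul, mul_smul_comm]

lemma pow_eq_smul_dpow (u : UCA L) (r : ℕ) : u ^ r = (r.factorial : ℂ) • dpow u r := by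
  rw [dpow, smul_smul, mul_inv_cancel₀ (by exact_mod_cast r.factorial_ne_zero), one_smul]

/-- The coefficient of `u^r t^s` in `exp (Σ_{p ≥ k} (x ⊗ t^p) u t^p)`, computed by the recursion
that `∂/∂u` gives. -/
def kxRec (x : L) (k : ℕ) : ℕ → ℕ → UCA L
  | 0, s => if s = 0 then 1 else 0
  | r + 1, s => ((r + 1 : ℂ))⁻¹ • ∑ p ∈ Finset.Icc k s, xt x p * kxRec x k r (s - p)

section KxRec

variable (x : L) (k : ℕ)

lemma kxRec_zero (s : ℕ) : kxRec x k 0 s = if s = 0 then 1 else 0 := rfl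

lemma succ_smul_kxRec_succ (r s : ℕ) :
    ((r + 1 : ℂ)) • kxRec x k (r + 1) s = ∑ p ∈ Finset.Icc k s, xt x p * kxRec x k r (s - p) := by
  rw [kxRec, smul_smul, mul_inv_cancel₀ (Nat.cast_add_one_ne_zero r), one_smul]

lemma kxRec_eq_zero_of_lt {r s : ℕ} (hr : r ≠ 0) (hs : s < k * r) : kxRec x k r s = 0 := by
  induction r generalizing s with
  | zero => contradiction
  | succ r ih =>
    rw [kxRec, Finset.sum_eq_zero, smul_zero]
    intro p hp
    rw [Finset.mem_Icc] at hp
    rcases eq_or_ne r 0 with rfl | hr0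
    · rw [zero_add, mul_one] at hs
      omega
    · rw [ih hr0 (by rw [Nat.mul_succ] at hs; omega), mul_zero]

lemma kxRec_mul_self (r : ℕ) : kxRec x k r (k * r) = dpow (xt x k) r := by
  induction r with
  | zero => simp [kxRec_zero]
  | succ r ih =>
    have hterm : ∀ p ∈ Finset.Icc k (k * (r + 1)), xt x p * kxRec x k r (k * (r + 1) - p) =
        if p = k then xt x k * kxRec x k r (k * r) else 0 := by
      intro p hp
      rw [Finset.mem_Icc] at hp
      split_ifs with h
      · rw [h, Nat.mul_succ, Nat.add_sub_cancel]
      · rcases eq_or_ne r 0 with rfl | hr0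
        · rw [zero_add, mul_one] at hp
          omega
        · rw [kxRec_eq_zero_of_lt x k hr0 (by rw [Nat.mul_succ] at hp ⊢; omega), mul_zero]
    apply smul_right_injective _ (Nat.cast_add_one_ne_zero (R := ℂ) r)
    simp only
    rw [succ_smul_kxRec_succ, Finset.sum_congr rfl hterm, Finset.sum_ite_eq',
      if_pos (Finset.mem_Icc.mpr ⟨by simp, Nat.le_mul_of_pos_right k r.succ_pos⟩), ih, mul_dpow]

lemma sum_mul_kxRec_zero (s : ℕ) (G : ℕ → UCA L) :
    ∑ p ∈ Finset.Icc k s, G p * kxRec x k 0 (s - p) = if k ≤ s then G s else 0 := by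
  have hterm : ∀ p ∈ Finset.Icc k s, G p * kxRec x k 0 (s - p) = if s = p then G s else 0 := by
    intro p hp
    rw [Finset.mem_Icc] at hp
    rw [kxRec_zero]
    by_cases h : s = p
    · simp [h]
    · rw [if_neg (by omega), if_neg h, mul_zero]
  rw [Finset.sum_congr rfl hterm, Finset.sum_ite_eq]
  simp

lemma kxRec_one (s : ℕ) : kxRec x k 1 s = if k ≤ s then xt x s else 0 := by
  rw [kxRec, sum_mul_kxRec_zero]
  simp

end KxRec

/-- The summands of `kxRec_split`; the guard keeps `s - j * k` from truncating. -/
def kxRecTerm (x : L) (k r s j : ℕ) : UCA L :=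
  if j * k ≤ s then dpow (xt x k) j * kxRec x (k + 1) (r - j) (s - j * k) else 0

section KxRecSplit

variable (x : L) (k : ℕ)

lemma commute_xt_dpow (p q j : ℕ) : Commute (xt x p) (dpow (xt x q) j) :=
  ((commute_xt x p q).pow_right j).smul_right _

lemma xt_mul_kxRecTerm {s : ℕ} (hks : k ≤ s) (r j : ℕ) :
    xt x k * kxRecTerm x k r (s - k) j = ((j + 1 : ℂ)) • kxRecTerm x k (r + 1) s (j + 1) := by
  unfold kxRecTerm
  by_cases h : (j + 1) * k ≤ s
  · have e : s - k - j * k = s - (j + 1) * k := by rw [Nat.add_mul, one_mul]; omega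
    rw [if_pos (by rw [Nat.succ_mul] at h; omega), if_pos h, ← mul_assoc, mul_dpow,
      smul_mul_assoc, Nat.add_sub_add_right, e]
  · rw [if_neg (by rw [Nat.succ_mul] at h; omega), if_neg h, mul_zero, smul_zero]

lemma sum_xt_mul_kxRecTerm {r j : ℕ} (hj : j ≤ r) (s : ℕ) :
    ∑ p ∈ Finset.Icc (k + 1) s, xt x p * kxRecTerm x k r (s - p) j =
      ((r + 1 - j : ℕ) : ℂ) • kxRecTerm x k (r + 1) s j := by
  by_cases h : j * k ≤ s
  · have hterm : ∀ p ∈ Finset.Icc (k + 1) (s - j * k), xt x p * kxRecTerm x k r (s - p) j =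
        dpow (xt x k) j * (xt x p * kxRec x (k + 1) (r - j) (s - j * k - p)) := by
      intro p hp
      rw [Finset.mem_Icc] at hp
      rw [kxRecTerm, if_pos (by omega), ← mul_assoc, (commute_xt_dpow x p k j).eq, mul_assoc,
        Nat.sub_right_comm]
    rw [kxRecTerm, if_pos h, Nat.sub_add_comm hj, Nat.cast_succ, ← mul_smul_comm,
      succ_smul_kxRec_succ, Finset.mul_sum, ← Finset.sum_congr rfl hterm]
    refine (Finset.sum_subset (Finset.Icc_subset_Icc_right (Nat.sub_le s (j * k))) ?_).symm
    intro p hp hp'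
    simp only [Finset.mem_Icc] at hp hp'
    rw [kxRecTerm, if_neg (by omega), mul_zero]
  · rw [kxRecTerm, if_neg h, smul_zero]
    refine Finset.sum_eq_zero fun p _ => ?_
    rw [kxRecTerm, if_neg (by omega), mul_zero]

theorem kxRec_split (r s : ℕ) :
    kxRec x k r s = ∑ j ∈ Finset.range (r + 1), kxRecTerm x k r s j := by
  induction r generalizing s with
  | zero => simp [kxRecTerm, kxRec_zero]
  | succ r ih =>
    by_cases hks : k ≤ s
    · apply smul_right_injective _ (Nat.cast_add_one_ne_zero (R := ℂ) r)
      have hfirst : xt x k * kxRec x k r (s - k) =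
          ∑ j ∈ Finset.range (r + 2), (j : ℂ) • kxRecTerm x k (r + 1) s j := by
        rw [ih, Finset.mul_sum, Finset.sum_range_succ' _ (r + 1), Nat.cast_zero, zero_smul,
          add_zero]
        refine Finset.sum_congr rfl fun j _ => ?_
        rw [xt_mul_kxRecTerm x k hks, Nat.cast_succ]
      have hrest : ∑ p ∈ Finset.Icc (k + 1) s, xt x p * kxRec x k r (s - p) =
          ∑ j ∈ Finset.range (r + 2), ((r + 1 - j : ℕ) : ℂ) • kxRecTerm x k (r + 1) s j := by
        simp_rw [ih, Finset.mul_sum]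
        rw [Finset.sum_comm, Finset.sum_range_succ _ (r + 1), Nat.sub_self, Nat.cast_zero,
          zero_smul, add_zero]
        exact Finset.sum_congr rfl fun j hj =>
          sum_xt_mul_kxRecTerm x k (Nat.lt_succ_iff.mp (Finset.mem_range.mp hj)) s
      simp only
      rw [succ_smul_kxRec_succ, ← Finset.add_sum_Ioc_eq_sum_Icc hks,
        ← Finset.Icc_add_one_left_eq_Ioc, hfirst, hrest, ← Finset.sum_add_distrib,
        Finset.smul_sum]
      refine Finset.sum_congr rfl fun j hj => ?_
      rw [← add_smul, Nat.cast_sub (by simpa [Nat.lt_succ_iff] using hj)]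
      push_cast
      ring_nf
    · rw [kxRec_eq_zero_of_lt x k r.succ_ne_zero (by rw [Nat.mul_succ]; omega)]
      refine (Finset.sum_eq_zero fun j _ => ?_).symm
      rcases j with _ | j
      · simp only [kxRecTerm, zero_mul, Nat.zero_le, if_true, dpow_zero, one_mul, Nat.sub_zero]
        exact kxRec_eq_zero_of_lt x (k + 1) r.succ_ne_zero (by rw [Nat.mul_succ]; omega)
      · rw [kxRecTerm, if_neg (by rw [Nat.succ_mul]; omega)]

end KxRecSplit

section KxCombinatorics

/-- `kS` as a finset: its sequences `b` have `b p = 0` for `p > s`. -/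
def kSFinset (r s k : ℕ) : Finset (ℕ →₀ ℕ) :=
  ((Finset.range (s + 1)).finsuppAntidiag r).filter
    fun b => (b.sum fun p m => p * m) = s ∧ ∀ p < k, b p = 0

lemma apply_le_finsuppSum {g : ℕ → ℕ → ℕ} (hg : ∀ p, g p 0 = 0) (b : ℕ →₀ ℕ) (p : ℕ) :
    g p (b p) ≤ b.sum g := by
  by_cases h : b p = 0
  · simp [h, hg]
  · exact Finset.single_le_sum (f := fun q => g q (b q)) (fun _ _ => Nat.zero_le _)
      (Finsupp.mem_support_iff.mpr h)

lemma finsuppSum_add_single {g : ℕ → ℕ → ℕ} (hg : ∀ p, g p 0 = 0)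
    (hadd : ∀ p m n, g p (m + n) = g p m + g p n) (b : ℕ →₀ ℕ) (k j : ℕ) :
    (b + Finsupp.single k j).sum g = b.sum g + g k j := by
  rw [Finsupp.sum_add_index' hg hadd, Finsupp.sum_single_index (hg k)]

lemma eq_zero_of_mem_kS_of_lt {r s k : ℕ} {b : ℕ →₀ ℕ} (hb : b ∈ kS r s k) {p : ℕ}
    (hp : s < p) : b p = 0 := by
  have := apply_le_finsuppSum (g := fun p m => p * m) (by simp) b p
  rw [hb.2.1] at this
  by_contra h
  nlinarith [Nat.one_le_iff_ne_zero.mpr h]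

lemma mem_kSFinset {r s k : ℕ} {b : ℕ →₀ ℕ} : b ∈ kSFinset r s k ↔ b ∈ kS r s k := by
  rw [kSFinset, Finset.mem_filter, Finset.mem_finsuppAntidiag']
  refine ⟨fun ⟨⟨h1, _⟩, h2, h3⟩ => ⟨h1, h2, h3⟩, fun hb => ⟨⟨hb.1, fun p hp => ?_⟩, hb.2⟩⟩
  rw [Finset.mem_range, Nat.lt_succ_iff]
  by_contra h
  exact Finsupp.mem_support_iff.mp hp (eq_zero_of_mem_kS_of_lt hb (not_le.mp h))

lemma kSFinset_of_lt {r s k : ℕ} (hs : s < k) :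
    kSFinset r s k = if r = 0 ∧ s = 0 then {0} else ∅ := by
  ext b
  rw [mem_kSFinset]
  constructor
  · intro hb
    have hb0 : b = 0 := by
      ext p
      rcases lt_or_ge p k with hp | hp
      · exact hb.2.2 p hp
      · exact eq_zero_of_mem_kS_of_lt hb (by omega)
    obtain ⟨h1, h2, -⟩ := hb
    subst hb0
    simp only [Finsupp.sum_zero_index] at h1 h2
    simp [← h1, ← h2]
  · split_ifs with h
    · rintro hb
      rw [Finset.mem_singleton.mp hb, h.1, h.2]
      simp [kS]
    · simp

lemma sum_kSFinset_fiber {M : Type} [AddCommMonoid M] (f : (ℕ →₀ ℕ) → M) {r s k j : ℕ}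
    (hj : j ≤ r) (hjk : j * k ≤ s) :
    ∑ b ∈ kSFinset r s k with b k = j, f b =
      ∑ b ∈ kSFinset (r - j) (s - j * k) (k + 1), f (b + Finsupp.single k j) := by
  have hcount := finsuppSum_add_single (g := fun _ m => m) (fun _ => rfl) (fun _ _ _ => rfl)
  have hweight := finsuppSum_add_single (g := fun p m => p * m) (by simp) (fun _ _ _ => by ring)
  refine Finset.sum_nbij' (Finsupp.erase k) (· + Finsupp.single k j) ?_ ?_ ?_ ?_ ?_
  · intro b hb
    simp only [Finset.mem_filter, mem_kSFinset] at hb ⊢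
    obtain ⟨⟨h1, h2, h3⟩, hbk⟩ := hb
    have e1 := hcount (b.erase k) k (b k)
    have e2 := hweight (b.erase k) k (b k)
    rw [Finsupp.erase_add_single, h1, hbk] at e1
    rw [Finsupp.erase_add_single, h2, hbk] at e2
    refine ⟨by omega, by rw [Nat.mul_comm] at e2; omega, fun p hp => ?_⟩
    rcases eq_or_ne p k with rfl | hpk
    · exact Finsupp.erase_same
    · rw [Finsupp.erase_ne hpk, h3 p (by omega)]
  · intro b hb
    simp only [Finset.mem_filter, mem_kSFinset] at hb ⊢
    obtain ⟨h1, h2, h3⟩ := hb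
    refine ⟨⟨?_, ?_, fun p hp => ?_⟩, by simp [h3 k k.lt_succ_self]⟩
    · rw [hcount, h1]
      omega
    · rw [hweight, h2, Nat.mul_comm k]
      omega
    · simp [h3 p (by omega), hp.ne]
  · intro b hb
    rw [Finset.mem_filter] at hb
    rw [← hb.2, Finsupp.erase_add_single]
  · intro b hb
    rw [mem_kSFinset] at hb
    ext p
    rcases eq_or_ne p k with rfl | hpk
    · simp [hb.2.2 p p.lt_succ_self]
    · simp [Finsupp.erase_ne hpk]
  · intro b hb
    rw [Finset.mem_filter] at hb
    rw [← hb.2, Finsupp.erase_add_single]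

def prodDpow (x : L) (n : ℕ) (b : ℕ →₀ ℕ) : UCA L :=
  ((List.range n).map fun p => dpow (xt x p) (b p)).prod

variable (x : L)

lemma prodDpow_succ (n : ℕ) (b : ℕ →₀ ℕ) :
    prodDpow x (n + 1) b = prodDpow x n b * dpow (xt x n) (b n) := by
  simp [prodDpow, List.range_succ]

lemma prodDpow_zero_right (n : ℕ) : prodDpow x n 0 = 1 := by
  simp [prodDpow]

lemma prodDpow_congr {n : ℕ} {a b : ℕ →₀ ℕ} (h : ∀ p < n, a p = b p) :
    prodDpow x n a = prodDpow x n b := by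
  induction n with
  | zero => rfl
  | succ n ih =>
    rw [prodDpow_succ, prodDpow_succ, ih fun p hp => h p (by omega), h n n.lt_succ_self]

lemma prodDpow_eq_of_le {m n : ℕ} (b : ℕ →₀ ℕ) (hmn : m ≤ n) (h : ∀ p, m ≤ p → b p = 0) :
    prodDpow x n b = prodDpow x m b := by
  induction n, hmn using Nat.le_induction with
  | base => rfl
  | succ n hmn ih => rw [prodDpow_succ, h n hmn, dpow_zero, mul_one, ih]

lemma commute_dpow_prodDpow (q j n : ℕ) (b : ℕ →₀ ℕ) :
    Commute (dpow (xt x q) j) (prodDpow x n b) := by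
  induction n with
  | zero => exact Commute.one_right _
  | succ n ih =>
    rw [prodDpow_succ]
    exact ih.mul_right ((((commute_xt x q n).pow_pow j (b n)).smul_left _).smul_right _)

lemma prodDpow_add_single {k n : ℕ} (hkn : k < n) (j : ℕ) {b : ℕ →₀ ℕ} (hb : b k = 0) :
    prodDpow x n (b + Finsupp.single k j) = dpow (xt x k) j * prodDpow x n b := by
  induction n, hkn using Nat.le_induction with
  | base =>
    rw [prodDpow_succ, prodDpow_succ, hb, dpow_zero, mul_one,
      prodDpow_congr x (a := b + Finsupp.single k j) (b := b) fun p hp => by simp [hp.ne'],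
      Finsupp.add_apply, hb, Finsupp.single_eq_same, zero_add,
      (commute_dpow_prodDpow x k j k b).eq]
  | succ n hkn ih =>
    rw [prodDpow_succ, prodDpow_succ, ih, mul_assoc, Finsupp.add_apply,
      Finsupp.single_eq_of_ne (by omega), add_zero]

lemma kx_eq_sum_prodDpow (r s k : ℕ) {n : ℕ} (hn : s + 1 ≤ n) :
    kx x r s k = ∑ b ∈ kSFinset r s k, prodDpow x n b := by
  have hcoe : kS r s k = ↑(kSFinset r s k) := by ext; rw [Finset.mem_coe, mem_kSFinset]
  rw [kx, hcoe, finsum_mem_coe_finset]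
  refine Finset.sum_congr rfl fun b hb => (prodDpow_eq_of_le x b hn fun p hp => ?_).symm
  exact eq_zero_of_mem_kS_of_lt (mem_kSFinset.mp hb) (by omega)

lemma kx_of_lt {r s k : ℕ} (hs : s < k) : kx x r s k = if r = 0 ∧ s = 0 then 1 else 0 := by
  rw [kx_eq_sum_prodDpow x r s k le_rfl, kSFinset_of_lt hs]
  split_ifs <;> simp [prodDpow_zero_right]

lemma kx_split (r s k : ℕ) :
    kx x r s k = ∑ j ∈ Finset.range (r + 1),
      if j * k ≤ s then dpow (xt x k) j * kx x (r - j) (s - j * k) (k + 1) else 0 := by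
  rw [kx_eq_sum_prodDpow x r s k (n := s + k + 1) (by omega),
    ← Finset.sum_fiberwise_of_maps_to (g := fun b => b k) (t := Finset.range (r + 1))
      fun b hb => ?_]
  · refine Finset.sum_congr rfl fun j hj => ?_
    rw [Finset.mem_range, Nat.lt_succ_iff] at hj
    split_ifs with hjk
    · rw [sum_kSFinset_fiber _ hj hjk, kx_eq_sum_prodDpow x _ _ _ (n := s + k + 1) (by omega),
        Finset.mul_sum]
      exact Finset.sum_congr rfl fun b hb =>
        prodDpow_add_single x (by omega) j ((mem_kSFinset.mp hb).2.2 k k.lt_succ_self)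
    · refine Finset.sum_eq_zero fun b hb => absurd ?_ hjk
      rw [Finset.mem_filter, mem_kSFinset] at hb
      have := apply_le_finsuppSum (g := fun p m => p * m) (by simp) b k
      rw [hb.1.2.1, hb.2, Nat.mul_comm] at this
      exact this
  · have := apply_le_finsuppSum (g := fun _ m => m) (fun _ => rfl) b k
    rw [(mem_kSFinset.mp hb).1] at this
    exact Finset.mem_range.mpr (Nat.lt_succ_of_le this)

lemma kxRec_of_lt {r s k : ℕ} (hs : s < k) : kxRec x k r s = if r = 0 ∧ s = 0 then 1 else 0 := by
  rcases eq_or_ne r 0 with rfl | hr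
  · simp [kxRec_zero]
  · rw [kxRec_eq_zero_of_lt x k hr (by nlinarith [Nat.one_le_iff_ne_zero.mpr hr]),
      if_neg (by tauto)]

theorem kx_eq_kxRec (r s k : ℕ) : kx x r s k = kxRec x k r s := by
  rcases lt_or_ge s k with hs | hks
  · rw [kx_of_lt x hs, kxRec_of_lt x hs]
  · rw [kx_split, kxRec_split]
    refine Finset.sum_congr rfl fun j _ => ?_
    rw [kxRecTerm]
    split_ifs
    · rw [kx_eq_kxRec (r - j) (s - j * k) (k + 1)]
    · rfl
termination_by s + 1 - k
decreasing_by omega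

end KxCombinatorics

lemma sum_Icc_sum_Icc_sub_comm {M : Type} [AddCommMonoid M] (f : ℕ → ℕ → M) (k s : ℕ) :
    ∑ q ∈ Finset.Icc k s, ∑ p ∈ Finset.Icc k (s - q), f q p =
      ∑ p ∈ Finset.Icc k s, ∑ q ∈ Finset.Icc k (s - p), f q p :=
  Finset.sum_comm' fun q p => by simp only [Finset.mem_Icc]; omega

lemma sum_Icc_sum_Icc_sub_add {M : Type} [AddCommMonoid M] (g : ℕ → M) (s : ℕ) :
    ∑ q ∈ Finset.Icc 0 s, ∑ p ∈ Finset.Icc 0 (s - q), g (q + p) =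
      ∑ d ∈ Finset.Icc 0 s, (d + 1) • g d := by
  have hinner : ∀ q ∈ Finset.Icc 0 s,
      ∑ p ∈ Finset.Icc 0 (s - q), g (q + p) = ∑ d ∈ Finset.Icc q s, g d := by
    intro q hq
    rw [Finset.mem_Icc] at hq
    have hmap := Finset.map_add_left_Icc 0 (s - q) q
    rw [add_zero, Nat.add_sub_cancel' hq.2] at hmap
    rw [← hmap, Finset.sum_map]
    rfl
  rw [Finset.sum_congr rfl hinner, Finset.sum_comm' (t' := Finset.Icc 0 s)
    (s' := fun d => Finset.Icc 0 d) fun q d => by simp only [Finset.mem_Icc]; omega]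
  simp

lemma sum_Icc_zero_succ {M : Type} [AddCommMonoid M] (f : ℕ → M) (s : ℕ) :
    ∑ m ∈ Finset.Icc 0 (s + 1), f m = f 0 + ∑ d ∈ Finset.Icc 0 s, f (d + 1) := by
  rw [← Nat.range_succ_eq_Icc_zero, ← Nat.range_succ_eq_Icc_zero, Finset.sum_range_succ', add_comm]

section KxRecIdentities

variable {x : L} {k : ℕ}

lemma sum_xt_mul_sum_mul_kxRec (f : ℕ → UCA L) (hf : ∀ p q, Commute (xt x q) (f p)) (r s : ℕ) :
    ∑ q ∈ Finset.Icc k s, xt x q * ∑ p ∈ Finset.Icc k (s - q), f p * kxRec x k r (s - q - p) =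
      ((r + 1 : ℂ)) • ∑ p ∈ Finset.Icc k s, f p * kxRec x k (r + 1) (s - p) := by
  simp_rw [Finset.mul_sum]
  rw [sum_Icc_sum_Icc_sub_comm, Finset.smul_sum]
  refine Finset.sum_congr rfl fun p _ => ?_
  rw [← mul_smul_comm, succ_smul_kxRec_succ, Finset.mul_sum]
  refine Finset.sum_congr rfl fun q _ => ?_
  rw [← mul_assoc, (hf p q).eq, mul_assoc, Nat.sub_right_comm]

lemma sum_smul_xt_mul_kxRec (r s : ℕ) :
    ∑ p ∈ Finset.Icc k s, ((p : ℂ) • xt x p) * kxRec x k r (s - p) =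
      (s : ℂ) • kxRec x k (r + 1) s := by
  induction r generalizing s with
  | zero =>
    rw [sum_mul_kxRec_zero, kxRec_one]
    split_ifs <;> simp
  | succ r ih =>
    apply smul_right_injective _ (Nat.cast_add_one_ne_zero (R := ℂ) (r + 1))
    have hsplit : (s : ℂ) • ∑ q ∈ Finset.Icc k s, xt x q * kxRec x k (r + 1) (s - q) =
        ∑ q ∈ Finset.Icc k s, ((q : ℂ) • xt x q) * kxRec x k (r + 1) (s - q) +
          ∑ q ∈ Finset.Icc k s, xt x q * ((s - q : ℕ) : ℂ) • kxRec x k (r + 1) (s - q) := by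
      rw [Finset.smul_sum, ← Finset.sum_add_distrib]
      refine Finset.sum_congr rfl fun q hq => ?_
      rw [Finset.mem_Icc] at hq
      rw [mul_smul_comm, smul_mul_assoc, ← add_smul, Nat.cast_sub hq.2, add_sub_cancel]
    have hrest := sum_xt_mul_sum_mul_kxRec (x := x) (k := k) (fun p => (p : ℂ) • xt x p)
      (fun p q => ((commute_xt x q p).smul_right _)) r s
    simp only at hrest ⊢
    rw [smul_comm, succ_smul_kxRec_succ, hsplit]
    simp_rw [← ih]
    rw [hrest]
    push_cast
    module

lemma IsSl2Triple.xt_h_mul_kxRec {E F H : L} (t : IsSl2Triple H E F) (m k r s : ℕ) :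
    xt H m * kxRec F k (r + 1) s = kxRec F k (r + 1) s * xt H m -
      (2 : ℂ) • ∑ p ∈ Finset.Icc k s, xt F (m + p) * kxRec F k r (s - p) := by
  induction r generalizing s with
  | zero =>
    rw [kxRec_one, sum_mul_kxRec_zero]
    split_ifs
    · exact t.xt_h_mul_xt_f m s
    · simp
  | succ r ih =>
    apply smul_right_injective _ (Nat.cast_add_one_ne_zero (R := ℂ) (r + 1))
    have hterm : ∀ q ∈ Finset.Icc k s, xt H m * (xt F q * kxRec F k (r + 1) (s - q)) =
        xt F q * kxRec F k (r + 1) (s - q) * xt H m -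
          (2 : ℂ) • (xt F q * ∑ p ∈ Finset.Icc k (s - q), xt F (m + p) * kxRec F k r (s - q - p)) -
          (2 : ℂ) • (xt F (m + q) * kxRec F k (r + 1) (s - q)) := by
      intro q _
      rw [← mul_assoc, t.xt_h_mul_xt_f, sub_mul, mul_assoc, ih, smul_mul_assoc, mul_sub,
        mul_smul_comm, mul_assoc]
    simp only
    rw [← mul_smul_comm, succ_smul_kxRec_succ, Finset.mul_sum, Finset.sum_congr rfl hterm,
      Finset.sum_sub_distrib, Finset.sum_sub_distrib, ← Finset.sum_mul, ← succ_smul_kxRec_succ,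
      ← Finset.smul_sum, ← Finset.smul_sum,
      sum_xt_mul_sum_mul_kxRec _ (fun p q => commute_xt F q (m + p))]
    rw [smul_mul_assoc]
    push_cast
    module

lemma sum_sum_xt_mul_kxRec_zero (r s : ℕ) :
    ∑ q ∈ Finset.Icc 0 s, ∑ p ∈ Finset.Icc 0 (s - q), xt x (1 + q + p) * kxRec x 0 r (s - q - p) =
      ((s + 1 : ℕ) : ℂ) • kxRec x 0 (r + 1) (s + 1) := by
  have hinner : ∀ q ∈ Finset.Icc 0 s, ∀ p ∈ Finset.Icc 0 (s - q),
      xt x (1 + q + p) * kxRec x 0 r (s - q - p) =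
        (fun d => xt x (d + 1) * kxRec x 0 r (s - d)) (q + p) := by
    intro q _ p _
    rw [add_comm 1, add_assoc, add_comm 1, ← add_assoc, Nat.sub_sub]
  rw [Finset.sum_congr rfl fun q hq => Finset.sum_congr rfl (hinner q hq),
    sum_Icc_sum_Icc_sub_add (fun d => xt x (d + 1) * kxRec x 0 r (s - d)),
    ← sum_smul_xt_mul_kxRec, sum_Icc_zero_succ]
  simp [← Nat.cast_smul_eq_nsmul ℂ]

lemma sum_smul_xt_mul_kxRec_zero (r s : ℕ) :
    ∑ q ∈ Finset.Icc 0 s, ((s + 1 - q : ℕ) : ℂ) • (xt x q * kxRec x 0 r (s + 1 - q)) =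
      (((s + 1 : ℕ) : ℂ) * r) • kxRec x 0 (r + 1) (s + 1) := by
  have hcoeff : ∀ q ∈ Finset.Icc 0 (s + 1),
      ((s + 1 - q : ℕ) : ℂ) • (xt x q * kxRec x 0 r (s + 1 - q)) =
        ((s + 1 : ℕ) : ℂ) • (xt x q * kxRec x 0 r (s + 1 - q)) -
          ((q : ℂ) • xt x q) * kxRec x 0 r (s + 1 - q) := by
    intro q hq
    rw [Finset.mem_Icc] at hq
    rw [Nat.cast_sub hq.2, sub_smul, smul_mul_assoc]
  have hext := Finset.sum_Icc_succ_top (Nat.zero_le (s + 1))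
    fun q => ((s + 1 - q : ℕ) : ℂ) • (xt x q * kxRec x 0 r (s + 1 - q))
  rw [Nat.sub_self, Nat.cast_zero, zero_smul, add_zero] at hext
  rw [← hext, Finset.sum_congr rfl hcoeff, Finset.sum_sub_distrib, ← Finset.smul_sum,
    ← succ_smul_kxRec_succ, sum_smul_xt_mul_kxRec, smul_smul, ← sub_smul]
  push_cast
  ring_nf

end KxRecIdentities

section Garland

variable {W : Type} [AddCommGroup W] [Module ℂ W] [Module (UCA L) W] [IsScalarTower ℂ (UCA L) W]
variable {E F H : L} {w : W}

lemma IsSl2Triple.xt_e_mul_kxRec_smul (t : IsSl2Triple H E F) (he : xt E 1 • w = 0)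
    (hh : ∀ m, 1 ≤ m → xt H m • w = 0) (r s : ℕ) :
    (xt E 1 * kxRec F 0 (r + 1) s) • w = (-((s + 1 : ℕ) : ℂ)) • kxRec F 0 r (s + 1) • w := by
  induction r generalizing s with
  | zero =>
    rw [kxRec_one, if_pos s.zero_le, t.xt_e_mul_xt_f, add_smul, mul_smul, he, smul_zero,
      hh _ (by omega), kxRec_zero, if_neg s.succ_ne_zero, zero_smul, smul_zero, add_zero]
  | succ r ih =>
    apply smul_right_injective W (Nat.cast_add_one_ne_zero (R := ℂ) (r + 1))
    have hterm : ∀ q ∈ Finset.Icc 0 s, (xt E 1 * (xt F q * kxRec F 0 (r + 1) (s - q))) • w =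
        (-(((s + 1 - q : ℕ) : ℂ) • (xt F q * kxRec F 0 r (s + 1 - q)) +
          (2 : ℂ) • ∑ p ∈ Finset.Icc 0 (s - q), xt F (1 + q + p) * kxRec F 0 r (s - q - p))) •
            w := by
      intro q hq
      rw [Finset.mem_Icc] at hq
      rw [← mul_assoc, t.xt_e_mul_xt_f, add_mul, add_smul, mul_assoc, mul_smul, ih,
        t.xt_h_mul_kxRec, sub_smul, mul_smul _ (xt H _), hh _ (by omega), smul_zero, zero_sub,
        Nat.sub_add_comm hq.2, smul_comm, ← mul_smul, ← smul_assoc, neg_add, add_smul]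
      simp only [neg_smul, smul_assoc]
    simp only
    rw [← smul_assoc, ← mul_smul_comm, succ_smul_kxRec_succ, Finset.mul_sum, Finset.sum_smul,
      Finset.sum_congr rfl hterm, ← Finset.sum_smul, Finset.sum_neg_distrib,
      Finset.sum_add_distrib, ← Finset.smul_sum, sum_smul_xt_mul_kxRec_zero,
      sum_sum_xt_mul_kxRec_zero, smul_smul, ← add_smul, ← neg_smul, smul_assoc, smul_smul]
    congr 1
    push_cast
    ring

theorem IsSl2Triple.garland (t : IsSl2Triple H E F) (he : xt E 1 • w = 0)
    (hh : ∀ m, 1 ≤ m → xt H m • w = 0) (s r : ℕ) :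
    (dpow (xt E 1) s * dpow (xt F 0) (s + r)) • w = ((-1 : ℂ) ^ s) • kxRec F 0 r s • w := by
  induction s generalizing r with
  | zero =>
    have h := kxRec_mul_self F 0 r
    rw [zero_mul] at h
    rw [dpow_zero, one_mul, zero_add, h, pow_zero, one_smul]
  | succ s ih =>
    apply smul_right_injective W (Nat.cast_add_one_ne_zero (R := ℂ) s)
    simp only
    rw [← smul_assoc, ← smul_mul_assoc, ← mul_dpow, mul_assoc, mul_smul,
      show s + 1 + r = s + (r + 1) by omega, ih, smul_comm, ← mul_smul,
      t.xt_e_mul_kxRec_smul he hh, smul_smul, smul_smul]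
    congr 1
    push_cast
    ring

end Garland

section Membership

variable {W : Type} [AddCommGroup W] [Module (UCA L) W] {P : Submodule (UCA L) W} {w : W}
  {x : L}

lemma kxRec_eq_add_sum_kxRecTerm (k r s : ℕ) :
    kxRec x k r s = kxRec x (k + 1) r s + ∑ j ∈ Finset.range r, kxRecTerm x k r s (j + 1) := by
  rw [kxRec_split, Finset.sum_range_succ', add_comm]
  simp [kxRecTerm]

lemma kxRecTerm_smul_mem {k r s j : ℕ}
    (h : j * k ≤ s → kxRec x (k + 1) (r - j) (s - j * k) • w ∈ P) :
    kxRecTerm x k r s j • w ∈ P := by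
  unfold kxRecTerm
  split_ifs with hjk
  · rw [mul_smul]
    exact P.smul_mem _ (h hjk)
  · rw [zero_smul]
    exact P.zero_mem

lemma one_add_mul_add_le_sub {k k' r s j N : ℕ} (hk : k + 1 ≤ k') (hj : j ≤ r) (hjk : j * k ≤ s)
    (h : 1 + k' * r + N ≤ s + r) : 1 + k' * (r - j) + N ≤ s - j * k + (r - j) := by
  have h1 : (k + 1) * j ≤ k' * j := Nat.mul_le_mul_right j hk
  have h2 : k' * (r - j) + k' * j = k' * r := by rw [← Nat.mul_add, Nat.sub_add_cancel hj]
  rw [Nat.add_mul, one_mul, Nat.mul_comm] at h1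
  omega

lemma one_le_of_one_add_mul_add_le {k r s N : ℕ} (hk : 1 ≤ k) (h : 1 + k * r + N ≤ s + r) :
    1 ≤ s := by
  nlinarith

theorem kxRec_smul_mem_of_kxRec_zero_smul_mem {k' N : ℕ}
    (h0 : ∀ r s, 1 ≤ r → 1 + k' * r + N ≤ s + r → kxRec x 0 r s • w ∈ P)
    {r k s : ℕ} (hk : k ≤ k') (h : 1 + k' * r + N ≤ s + r) : kxRec x k r s • w ∈ P := by
  induction r using Nat.strong_induction_on generalizing k s with
  | _ r ihr =>
  rcases Nat.eq_zero_or_pos r with rfl | hr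
  · rw [kxRec_zero, if_neg (by omega), zero_smul]
    exact P.zero_mem
  induction k with
  | zero => exact h0 r s hr h
  | succ k ihk =>
    rw [eq_sub_of_add_eq (kxRec_eq_add_sum_kxRecTerm k r s).symm, sub_smul, Finset.sum_smul]
    refine P.sub_mem (ihk (by omega)) (P.sum_mem fun j hj => kxRecTerm_smul_mem fun hjk => ?_)
    rw [Finset.mem_range] at hj
    exact ihr _ (by omega) (by omega) (one_add_mul_add_le_sub hk (by omega) hjk h)

theorem kxRec_smul_mem_of_forall {N : ℕ → ℕ}
    (hgen : ∀ r s k, 1 ≤ r → 1 ≤ k → 1 + k * r + N k ≤ s + r → kxRec x k r s • w ∈ P)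
    {k' r k s : ℕ} (hk' : 1 ≤ k') (hk : k ≤ k') (h : 1 + k' * r + N k' ≤ s + r) :
    kxRec x k r s • w ∈ P := by
  induction r using Nat.strong_induction_on generalizing k s with
  | _ r ihr =>
  rcases Nat.eq_zero_or_pos r with rfl | hr
  · rw [kxRec_zero, if_neg (by omega), zero_smul]
    exact P.zero_mem
  induction hk using Nat.decreasingInduction with
  | self => exact hgen r s k' hr hk' h
  | of_succ k hk ihk =>
    rw [kxRec_eq_add_sum_kxRecTerm, add_smul, Finset.sum_smul]
    refine P.add_mem ihk (P.sum_mem fun j hj => kxRecTerm_smul_mem fun hjk => ?_)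
    rw [Finset.mem_range] at hj
    exact ihr _ (by omega) hk (one_add_mul_add_le_sub hk (by omega) hjk h)

end Membership

def kxGens (ep em hc : Φ → L) (simple : ιI → Φ) (lam : Module.Dual ℂ L) (lamNat : Φ → ℕ)
    (ξ : Φ → ℕ → ℕ) : Set (Wloc ep em hc simple lam lamNat) :=
  {v | ∃ (α : Φ) (r s k : ℕ), 1 ≤ r ∧ 1 ≤ s ∧ 1 ≤ k ∧
        s + r ≥ 1 + k * r + tailSum (ξ α) k ∧
        v = kx (em α) r s k • wLam ep em hc simple lam lamNat}

section LocalWeylModule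

variable {ep em hc : Φ → L} {simple : ιI → Φ} {lam : Module.Dual ℂ L} {lamNat : Φ → ℕ}

lemma mem_weylGens_smul_wLam {u : UCA L} (hu : u ∈ weylGens ep em hc simple lam lamNat) :
    u • wLam ep em hc simple lam lamNat = 0 := by
  rw [wLam, ← Submodule.Quotient.mk_smul, smul_eq_mul, mul_one, Submodule.Quotient.mk_eq_zero]
  exact Submodule.subset_span hu

lemma xt_ep_smul_wLam (α : Φ) (m : ℕ) : xt (ep α) m • wLam ep em hc simple lam lamNat = 0 :=
  mem_weylGens_smul_wLam (Or.inl (Or.inl ⟨ep α, Submodule.subset_span ⟨α, rfl⟩, m, rfl⟩))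

lemma xt_hc_smul_wLam (α : Φ) {m : ℕ} (hm : 1 ≤ m) :
    xt (hc α) m • wLam ep em hc simple lam lamNat = 0 :=
  mem_weylGens_smul_wLam (Or.inl (Or.inr ⟨hc α, Submodule.subset_span ⟨α, rfl⟩, m, by
    rw [if_neg (by omega), zero_smul, sub_zero]⟩))

lemma pow_mul_pow_smul_wLam {α : Φ} (t : IsSl2Triple (hc α) (ep α) (em α)) (s r : ℕ) :
    (xt (ep α) 1 ^ s * xt (em α) 0 ^ (s + r)) • wLam ep em hc simple lam lamNat =
      ((s.factorial * (s + r).factorial : ℂ) * (-1) ^ s) •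
        kxRec (em α) 0 r s • wLam ep em hc simple lam lamNat := by
  rw [pow_eq_smul_dpow, pow_eq_smul_dpow, smul_mul_smul_comm, smul_assoc,
    t.garland (xt_ep_smul_wLam α 1) (fun m hm => xt_hc_smul_wLam α hm), smul_smul]

variable (ξ : Φ → ℕ → ℕ) {α : Φ}

theorem kxRec_smul_wLam_mem_span_xiGens (t : IsSl2Triple (hc α) (ep α) (em α)) {k r s : ℕ}
    (hk : 1 ≤ k) (h : 1 + k * r + tailSum (ξ α) k ≤ s + r) :
    kxRec (em α) k r s • wLam ep em hc simple lam lamNat ∈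
      Submodule.span (UCA L) (xiGens ep em hc simple lam lamNat ξ) := by
  refine kxRec_smul_mem_of_kxRec_zero_smul_mem (fun r' s' hr' h' => ?_) le_rfl h
  have hne : ((s'.factorial * (s' + r').factorial : ℂ) * (-1) ^ s') ≠ 0 := by
    simp [Nat.factorial_ne_zero]
  rw [← inv_smul_smul₀ hne (kxRec _ _ _ _ • _), ← pow_mul_pow_smul_wLam t]
  refine Submodule.smul_of_tower_mem _ _ (Submodule.subset_span ⟨α, s', r',
    one_le_of_one_add_mul_add_le hk h', hr', ⟨k, hk, by rw [Nat.mul_comm]; omega⟩, rfl⟩)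

theorem xiGen_mem_span_kxGens (t : IsSl2Triple (hc α) (ep α) (em α)) {k r s : ℕ} (hk : 1 ≤ k)
    (h : 1 + k * r + tailSum (ξ α) k ≤ s + r) :
    (xt (ep α) 1 ^ s * xt (em α) 0 ^ (s + r)) • wLam ep em hc simple lam lamNat ∈
      Submodule.span (UCA L) (kxGens ep em hc simple lam lamNat ξ) := by
  rw [pow_mul_pow_smul_wLam t]
  refine Submodule.smul_of_tower_mem _ _ (kxRec_smul_mem_of_forall (fun r' s' k' hr' hk' h' => ?_)
    hk (Nat.zero_le k) h)
  rw [← kx_eq_kxRec]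
  exact Submodule.subset_span
    ⟨α, r', s', k', hr', one_le_of_one_add_mul_add_le hk' h', hk', h', rfl⟩

end LocalWeylModule

theorem third_presentation_of_VXi_general
    {L : Type} [LieRing L] [LieAlgebra ℂ L] {Φ ιI : Type}
    (ep em hc : Φ → L) (simple : ιI → Φ)
    (lam : Module.Dual ℂ L) (lamNat : Φ → ℕ)
    -- the elements `x_α⁺, x_α⁻, h_α` form an `sl₂`-triple for each positive root `α`
    (htriple : ∀ α, IsSl2Triple (hc α) (ep α) (em α))
    (ξ : Φ → ℕ → ℕ) :
    Submodule.span (UCA L) (xiGens ep em hc simple lam lamNat ξ) =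
      Submodule.span (UCA L)
        {v | ∃ (α : Φ) (r s k : ℕ), 1 ≤ r ∧ 1 ≤ s ∧ 1 ≤ k ∧
              s + r ≥ 1 + k * r + tailSum (ξ α) k ∧
              v = kx (em α) r s k • wLam ep em hc simple lam lamNat} ∧
    ∀ (α : Φ) (r k : ℕ), 1 ≤ r → 1 ≤ k → r ≥ 1 + tailSum (ξ α) k →
      (xt (em α) k) ^ r • vXi ep em hc simple lam lamNat ξ = 0 := by
  refine ⟨le_antisymm (Submodule.span_le.mpr ?_) (Submodule.span_le.mpr ?_), ?_⟩
  · rintro _ ⟨α, s, r, -, -, ⟨k, hk, h⟩, rfl⟩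
    exact xiGen_mem_span_kxGens ξ (htriple α) hk (by rw [Nat.mul_comm]; omega)
  · rintro _ ⟨α, r, s, k, -, -, hk, h, rfl⟩
    rw [SetLike.mem_coe, kx_eq_kxRec]
    exact kxRec_smul_wLam_mem_span_xiGens ξ (htriple α) hk h
  · intro α r k _ hk h
    rw [vXi, ← Submodule.Quotient.mk_smul, Submodule.Quotient.mk_eq_zero, pow_eq_smul_dpow,
      ← kxRec_mul_self, smul_assoc]
    exact Submodule.smul_of_tower_mem _ _
      (kxRec_smul_wLam_mem_span_xiGens ξ (htriple α) hk (by omega))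

/-- Proposition `third`: the third presentation of `V(ξ)`.  The submodule of
`W_loc(λ)` generated by the elements `(x_α⁺⊗t)^s (x_α⁻⊗1)^{s+r} w_λ` (for `α ∈ R⁺`, `s,r ≥ 1`
with `s+r ≥ 1 + rk + Σ_{j≥k+1} ξ^α_j` for some `k ≥ 1`) coincides with the submodule generated
by the elements `_k x_α⁻(r,s) w_λ` (for `α ∈ R⁺`, `r,s,k ≥ 1` with
`s+r ≥ 1 + kr + Σ_{j≥k+1} ξ^α_j`); in particular, for all `α ∈ R⁺` and `r,k ≥ 1` with
`r ≥ 1 + Σ_{j≥k+1} ξ^α_j` one has `(x_α⁻ ⊗ t^k)^r v_ξ = 0`. -/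
theorem third_presentation_of_VXi
    {L : Type} [LieRing L] [LieAlgebra ℂ L] {Φ ιI : Type}
    (ep em hc : Φ → L) (simple : ιI → Φ)
    (lam : Module.Dual ℂ L) (lamNat : Φ → ℕ)
    -- the elements `x_α⁺, x_α⁻, h_α` form an `sl₂`-triple for each positive root `α`
    (htriple : ∀ α, IsSl2Triple (hc α) (ep α) (em α))
    -- `λ(h_α) = lamNat α` is a non-negative integer for every `α ∈ R⁺`, i.e. `λ ∈ P⁺`
    (hlam : ∀ α, lam (hc α) = (lamNat α : ℂ))
    -- `λ ≠ 0`
    (hlam_ne : lam ≠ 0)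
    -- `ξ` is a `λ`-compatible tuple of partitions
    (ξ : Φ → ℕ → ℕ) (hcompat : IsCompatible lamNat ξ) :
    Submodule.span (UCA L) (xiGens ep em hc simple lam lamNat ξ) =
      Submodule.span (UCA L)
        {v | ∃ (α : Φ) (r s k : ℕ), 1 ≤ r ∧ 1 ≤ s ∧ 1 ≤ k ∧
              s + r ≥ 1 + k * r + tailSum (ξ α) k ∧
              v = kx (em α) r s k • wLam ep em hc simple lam lamNat} ∧
    ∀ (α : Φ) (r k : ℕ), 1 ≤ r → 1 ≤ k → r ≥ 1 + tailSum (ξ α) k →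
      (xt (em α) k) ^ r • vXi ep em hc simple lam lamNat ξ = 0 :=
  third_presentation_of_VXi_general ep em hc simple lam lamNat htriple ξ

end
end

section
/- Let λ ∈ P⁺ be nonzero and ξ = (ξ^α)_{α∈R⁺} a λ-compatible tuple of partitions. If α ∈ R⁺ satisfies |ξ^α| > 0 and s_α is the number of nonzero parts of ξ^α, then (x_α⁻ ⊗ t^p) v_ξ = 0 for all p ≥ s_α. -/
open scoped TensorProduct
open Polynomial

noncomputable section

/-! ## The current algebra `𝔤[t] = ℂ[t] ⊗ 𝔤` and its universal enveloping algebra -/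

variable (L : Type) [LieRing L] [LieAlgebra ℂ L]

attribute [local instance 100] LieRing.ofAssociativeRing

variable {L}

/-! ## Root data for `𝔤`, the local Weyl module and the modules `V(ξ)`.

`Φ` indexes the positive roots `R⁺`; `ep α`, `em α`, `hc α` are the elements
`x_α⁺ ∈ 𝔤_α`, `x_α⁻ ∈ 𝔤_{-α}` and the coroot `h_α`; `ιI` indexes the simple roots via
`simple : ιI → Φ`.  The functional `lam` is the weight `λ` and `lamNat α = λ(h_α) ∈ ℤ≥0`. -/

variable {Φ ιI : Type}

/-!
Write `E = x_α⁺ ⊗ t`, `F b = x_α⁻ ⊗ t^b`, `H b = h_α ⊗ t^b`. On `v_ξ` the operators `E` and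
`H (b + 1)` vanish and the `F b` commute, so the `sl₂[t]` relations let us push `E` and `H` through a
monomial `F l₁ ⋯ F lₖ v_ξ`. Grade such monomials by degree `Σ lᵢ` and length `k`: `-E` sends one
to a nonnegative real combination of monomials of one degree more and one length less, and
`-H (b + 1)` to one of `b + 1` degrees more and the same length. Hence `(-E)^p F 0^(p+1) v_ξ` is a
nonnegative combination of monomials of length one and degree `p`, i.e. a nonnegative multiple of
`F p v_ξ`; following the chain `F j F 0^(p-j) v_ξ`, whose coefficient gains the factor
`2 (p - j)` at each step, shows that the multiple is positive, so no cancellation can occur.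
For `p ≥ s_α` the vector `E^p F 0^(p+1) v_ξ` is one of the defining relations of `V(ξ)`
(`s = p`, `r = 1`, `k = s_α`), hence `F p v_ξ = 0`.
-/

section CurrentSl2

variable {A W : Type*} [Ring A] [AddCommGroup W] [Module A W]

structure IsCurrentSl2HighestWeight (E : A) (F H : ℕ → A) (w : W) : Prop where
  commute_F : ∀ a b, Commute (F a) (F b)
  H_mul_F : ∀ b c, H b * F c = F c * H b - 2 • F (b + c)
  E_mul_F : ∀ b, E * F b = F b * E + H (b + 1)
  H_succ_smul : ∀ b, H (b + 1) • w = 0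
  E_smul : E • w = 0

def lowerMonomial (F : ℕ → A) (w : W) (l : List ℕ) : W := (l.map F).prod • w

variable {E : A} {F H : ℕ → A} {w : W}

@[simp]
lemma lowerMonomial_nil : lowerMonomial F w [] = w := by
  simp [lowerMonomial]

@[simp]
lemma lowerMonomial_cons (a : ℕ) (l : List ℕ) :
    lowerMonomial F w (a :: l) = F a • lowerMonomial F w l := by
  simp [lowerMonomial, mul_smul]

lemma lowerMonomial_replicate (m a : ℕ) :
    lowerMonomial F w (List.replicate m a) = F a ^ m • w := by
  simp [lowerMonomial, List.map_replicate, List.prod_replicate]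

lemma lowerMonomial_perm (hF : ∀ a b, Commute (F a) (F b)) {l l' : List ℕ} (h : l.Perm l') :
    lowerMonomial F w l = lowerMonomial F w l' := by
  rw [lowerMonomial, lowerMonomial,
    (h.map F).prod_eq' (List.pairwise_map.2 (List.pairwise_of_forall fun a b => hF a b))]

lemma neg_H_smul_lowerMonomial_cons (hw : IsCurrentSl2HighestWeight E F H w) (b c : ℕ)
    (l : List ℕ) :
    -(H b • lowerMonomial F w (c :: l)) =
      F c • -(H b • lowerMonomial F w l) + 2 • lowerMonomial F w ((b + c) :: l) := by
  rw [lowerMonomial_cons, lowerMonomial_cons, ← mul_smul, hw.H_mul_F, sub_smul, mul_smul,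
    smul_assoc, smul_neg]
  abel

lemma E_smul_lowerMonomial_cons (hw : IsCurrentSl2HighestWeight E F H w) (a : ℕ)
    (l : List ℕ) :
    E • lowerMonomial F w (a :: l) =
      F a • E • lowerMonomial F w l + H (a + 1) • lowerMonomial F w l := by
  rw [lowerMonomial_cons, ← mul_smul, hw.E_mul_F, add_smul, mul_smul]

lemma neg_H_succ_smul_replicate (hw : IsCurrentSl2HighestWeight E F H w) (b m : ℕ) :
    -(H (b + 1) • lowerMonomial F w (List.replicate (m + 1) 0)) =
      (2 * (m + 1)) • lowerMonomial F w ((b + 1) :: List.replicate m 0) := by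
  induction m with
  | zero =>
    rw [List.replicate_one, neg_H_smul_lowerMonomial_cons hw]
    simp [hw.H_succ_smul]
  | succ m ih =>
    rw [List.replicate_succ, neg_H_smul_lowerMonomial_cons hw, add_zero, ih, smul_comm,
      ← lowerMonomial_cons, lowerMonomial_perm hw.commute_F (List.Perm.swap _ _ _),
      List.replicate_succ, ← add_nsmul]
    ring_nf

section Cone

variable (𝕜 : Type*) [Field 𝕜] [LinearOrder 𝕜] [IsStrictOrderedRing 𝕜] [Module 𝕜 W]

/-- The monomials need not be linearly independent in `W`, so positivity of coefficients is
tracked through the cone they span. -/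
def lowerCone (F : ℕ → A) (w : W) (j n : ℕ) : PointedCone 𝕜 W :=
  PointedCone.hull 𝕜 {u | ∃ l : List ℕ, l.sum = j ∧ l.length = n ∧ lowerMonomial F w l = u}

variable {𝕜}

lemma lowerMonomial_mem_lowerCone {l : List ℕ} {j n : ℕ} (hj : l.sum = j) (hn : l.length = n) :
    lowerMonomial F w l ∈ lowerCone 𝕜 F w j n :=
  PointedCone.subset_hull ⟨l, hj, hn, rfl⟩

lemma mem_lowerCone_one {j : ℕ} {u : W} (hu : u ∈ lowerCone 𝕜 F w j 1) :
    ∃ c : 𝕜, 0 ≤ c ∧ u = c • lowerMonomial F w [j] := by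
  have hgen : {u | ∃ l : List ℕ, l.sum = j ∧ l.length = 1 ∧ lowerMonomial F w l = u} =
      {lowerMonomial F w [j]} := by
    ext u
    constructor
    · rintro ⟨l, hj, hl, rfl⟩
      obtain ⟨a, rfl⟩ := List.length_eq_one_iff.1 hl
      simp_all
    · rintro rfl
      exact ⟨[j], by simp, rfl, rfl⟩
  rw [lowerCone, hgen] at hu
  obtain ⟨c, rfl⟩ := Submodule.mem_span_singleton.1 hu
  exact ⟨c, c.2, rfl⟩

variable [SMulCommClass A 𝕜 W]

lemma smul_mem_of_forall_lowerMonomial_mem {a : A} {C : PointedCone 𝕜 W} {j n : ℕ}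
    (ha : ∀ l : List ℕ, l.sum = j → l.length = n → a • lowerMonomial F w l ∈ C) {u : W}
    (hu : u ∈ lowerCone 𝕜 F w j n) : a • u ∈ C := by
  have hle : lowerCone 𝕜 F w j n ≤ C.comap (DistribSMul.toLinearMap 𝕜 W a) :=
    Submodule.span_le.2 fun _ ⟨l, hj, hn, hl⟩ => hl ▸ ha l hj hn
  exact hle hu

lemma F_smul_mem_lowerCone (a : ℕ) {j n : ℕ} {u : W} (hu : u ∈ lowerCone 𝕜 F w j n) :
    F a • u ∈ lowerCone 𝕜 F w (a + j) (n + 1) :=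
  smul_mem_of_forall_lowerMonomial_mem (fun l hj hn => by
    rw [← lowerMonomial_cons]
    exact lowerMonomial_mem_lowerCone (by simp [hj]) (by simp [hn])) hu

lemma neg_H_succ_smul_lowerMonomial_mem (hw : IsCurrentSl2HighestWeight E F H w) (b : ℕ)
    (l : List ℕ) :
    -(H (b + 1) • lowerMonomial F w l) ∈ lowerCone 𝕜 F w (l.sum + b + 1) l.length := by
  induction l with
  | nil => simp [hw.H_succ_smul]
  | cons c l ih =>
    rw [neg_H_smul_lowerMonomial_cons hw, List.sum_cons, List.length_cons]
    have hmem : lowerMonomial F w ((b + 1 + c) :: l) ∈ lowerCone 𝕜 F w (c + l.sum + b + 1)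
        (l.length + 1) := lowerMonomial_mem_lowerCone (by simp only [List.sum_cons]; omega) rfl
    refine add_mem ?_ (nsmul_mem hmem 2)
    rw [show c + l.sum + b + 1 = c + (l.sum + b + 1) by omega]
    exact F_smul_mem_lowerCone c ih

lemma neg_E_smul_lowerMonomial_mem (hw : IsCurrentSl2HighestWeight E F H w) (n : ℕ)
    {l : List ℕ} (hl : l.length = n + 1) :
    -(E • lowerMonomial F w l) ∈ lowerCone 𝕜 F w (l.sum + 1) n := by
  induction n generalizing l with
  | zero =>
    obtain ⟨a, rfl⟩ := List.length_eq_one_iff.1 hl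
    rw [E_smul_lowerMonomial_cons hw, lowerMonomial_nil, hw.E_smul, smul_zero, zero_add]
    simpa using neg_H_succ_smul_lowerMonomial_mem (𝕜 := 𝕜) hw a []
  | succ n ih =>
    obtain ⟨a, l, rfl⟩ := List.exists_cons_of_length_eq_add_one hl
    have hl' : l.length = n + 1 := by simpa using hl
    rw [E_smul_lowerMonomial_cons hw, neg_add, ← smul_neg]
    refine add_mem ?_ ?_
    · rw [List.sum_cons, add_assoc]
      exact F_smul_mem_lowerCone a (ih hl')
    · rw [List.sum_cons, ← hl', show a + l.sum + 1 = l.sum + a + 1 by omega]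
      exact neg_H_succ_smul_lowerMonomial_mem hw a l

lemma neg_E_smul_mem_lowerCone (hw : IsCurrentSl2HighestWeight E F H w) {j n : ℕ} {u : W}
    (hu : u ∈ lowerCone 𝕜 F w j (n + 1)) : -(E • u) ∈ lowerCone 𝕜 F w (j + 1) n := by
  rw [← neg_smul]
  refine smul_mem_of_forall_lowerMonomial_mem (fun l hj hn => ?_) hu
  rw [neg_smul, ← hj]
  exact neg_E_smul_lowerMonomial_mem hw n hn

lemma exists_neg_E_smul_lowerMonomial_cons_replicate (hw : IsCurrentSl2HighestWeight E F H w)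
    (j m : ℕ) :
    ∃ r ∈ lowerCone 𝕜 F w (j + 1) (m + 1),
      -(E • lowerMonomial F w (j :: List.replicate (m + 1) 0)) =
        (2 * (m + 1)) • lowerMonomial F w ((j + 1) :: List.replicate m 0) + r := by
  have hmem : -(E • lowerMonomial F w (List.replicate (m + 1) 0)) ∈ lowerCone 𝕜 F w 1 m := by
    have h := neg_E_smul_lowerMonomial_mem (𝕜 := 𝕜) hw m
      (List.length_replicate (n := m + 1) (a := 0))
    rwa [List.sum_replicate, smul_zero, zero_add] at h
  refine ⟨F j • -(E • lowerMonomial F w (List.replicate (m + 1) 0)),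
    F_smul_mem_lowerCone j hmem, ?_⟩
  rw [E_smul_lowerMonomial_cons hw, neg_add, neg_H_succ_smul_replicate hw, ← smul_neg, add_comm]

lemma exists_neg_E_pow_mul_F_zero_pow_smul_eq (hw : IsCurrentSl2HighestWeight E F H w)
    {p j : ℕ} (hj : j ≤ p) :
    ∃ γ : 𝕜, 0 < γ ∧ ∃ r ∈ lowerCone 𝕜 F w j (p - j + 1),
      ((-E) ^ j * F 0 ^ (p + 1)) • w =
        γ • lowerMonomial F w (j :: List.replicate (p - j) 0) + r := by
  induction j with
  | zero =>
    refine ⟨1, one_pos, 0, zero_mem _, ?_⟩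
    rw [one_smul, add_zero, pow_zero, one_mul, ← List.replicate_succ, lowerMonomial_replicate,
      Nat.sub_zero]
  | succ j ih =>
    obtain ⟨γ, hγ, r, hr, hu⟩ := ih (by omega)
    obtain ⟨m, hm, hm'⟩ : ∃ m, p - j = m + 1 ∧ p - (j + 1) = m := ⟨p - (j + 1), by omega, rfl⟩
    obtain ⟨r', hr', hE⟩ := exists_neg_E_smul_lowerMonomial_cons_replicate (𝕜 := 𝕜) hw j m
    rw [hm] at hr hu
    rw [hm']
    refine ⟨γ * (2 * (m + 1) : ℕ), by positivity, γ • r' + -(E • r),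
      add_mem (PointedCone.smul_mem _ hγ.le hr') (neg_E_smul_mem_lowerCone hw hr), ?_⟩
    rw [pow_succ', neg_mul, neg_mul, neg_smul, mul_assoc, mul_smul, hu, smul_add, smul_comm,
      neg_add, ← smul_neg, hE, smul_add, ← Nat.cast_smul_eq_nsmul 𝕜, smul_smul, add_assoc]

theorem F_smul_mem_span_singleton (hw : IsCurrentSl2HighestWeight E F H w) (p : ℕ) :
    F p • w ∈ 𝕜 ∙ (((-E) ^ p * F 0 ^ (p + 1)) • w) := by
  obtain ⟨γ, hγ, r, hr, hu⟩ := exists_neg_E_pow_mul_F_zero_pow_smul_eq (𝕜 := 𝕜) hw le_rfl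
  rw [Nat.sub_self, zero_add] at hr
  obtain ⟨c, hc, rfl⟩ := mem_lowerCone_one hr
  rw [Nat.sub_self, List.replicate_zero, ← add_smul] at hu
  refine Submodule.mem_span_singleton.2 ⟨(γ + c)⁻¹, ?_⟩
  rw [hu, smul_smul, inv_mul_cancel₀ (by positivity), one_smul, lowerMonomial_cons,
    lowerMonomial_nil]

end Cone

end CurrentSl2

lemma xt_mul_xt (x y : L) (a b : ℕ) :
    xt x a * xt y b = xt y b * xt x a + xt ⁅x, y⁆ (a + b) := by
  have h := (ιU L).map_lie ((X ^ a : ℂ[X]) ⊗ₜ[ℂ] x) ((X ^ b : ℂ[X]) ⊗ₜ[ℂ] y)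
  rw [LieAlgebra.ExtendScalars.bracket_tmul, ← pow_add, Ring.lie_def] at h
  rw [show xt ⁅x, y⁆ (a + b) = _ from h, add_sub_cancel]

lemma xt_neg_two_nsmul (x : L) (s : ℕ) : xt (-(2 • x)) s = -(2 • xt x s) := by
  simp only [xt, TensorProduct.tmul_neg, TensorProduct.tmul_smul, map_neg, map_nsmul]

lemma isCurrentSl2HighestWeight_of_isSl2Triple {M : Type*} [AddCommGroup M] [Module (UCA L) M]
    {h e f : L} (ht : IsSl2Triple h e f) {m : M} (hh : ∀ b, xt h (b + 1) • m = 0)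
    (he : xt e 1 • m = 0) :
    IsCurrentSl2HighestWeight (xt e 1) (xt f) (xt h) m where
  commute_F a b := (xt_mul_xt f f a b).trans <| by
    simp only [xt, lie_self, TensorProduct.tmul_zero, map_zero, add_zero]
  H_mul_F b c := by rw [xt_mul_xt, ht.lie_h_f_nsmul, xt_neg_two_nsmul, sub_eq_add_neg]
  E_mul_F b := by rw [xt_mul_xt, ht.lie_e_f, add_comm 1]
  H_succ_smul := hh
  E_smul := he

section WeylModule

variable {ep em hc : Φ → L} {simple : ιI → Φ} {lam : Module.Dual ℂ L} {lamNat : Φ → ℕ}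
  {ξ : Φ → ℕ → ℕ}

lemma smul_vXi_eq_zero_of_mem_weylGens {u : UCA L}
    (hu : u ∈ weylGens ep em hc simple lam lamNat) :
    u • vXi ep em hc simple lam lamNat ξ = 0 := by
  rw [vXi, ← Submodule.Quotient.mk_smul, wLam, ← Submodule.Quotient.mk_smul, smul_eq_mul, mul_one,
    (Submodule.Quotient.mk_eq_zero _).2 (Submodule.subset_span hu), Submodule.Quotient.mk_zero]

lemma smul_vXi_eq_zero_of_smul_wLam_mem_xiGens {u : UCA L}
    (hu : u • wLam ep em hc simple lam lamNat ∈ xiGens ep em hc simple lam lamNat ξ) :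
    u • vXi ep em hc simple lam lamNat ξ = 0 := by
  rw [vXi, ← Submodule.Quotient.mk_smul, Submodule.Quotient.mk_eq_zero]
  exact Submodule.subset_span hu

lemma isCurrentSl2HighestWeight_vXi {α : Φ} (ht : IsSl2Triple (hc α) (ep α) (em α)) :
    IsCurrentSl2HighestWeight (xt (ep α) 1) (xt (em α)) (xt (hc α))
      (vXi ep em hc simple lam lamNat ξ) :=
  isCurrentSl2HighestWeight_of_isSl2Triple ht
    (fun b => smul_vXi_eq_zero_of_mem_weylGens <| Or.inl <| Or.inr
      ⟨hc α, Submodule.subset_span ⟨α, rfl⟩, b + 1, by simp⟩)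
    (smul_vXi_eq_zero_of_mem_weylGens <| Or.inl <| Or.inl
      ⟨ep α, Submodule.subset_span ⟨α, rfl⟩, 1, rfl⟩)

end WeylModule

theorem xt_em_smul_vXi_eq_zero_of_numParts_le_general
    {L : Type} [LieRing L] [LieAlgebra ℂ L] {Φ ιI : Type}
    (ep em hc : Φ → L) (simple : ιI → Φ)
    (lam : Module.Dual ℂ L) (lamNat : Φ → ℕ)
    -- the elements `x_α⁺, x_α⁻, h_α` form an `sl₂`-triple for each positive root `α`
    (htriple : ∀ α, IsSl2Triple (hc α) (ep α) (em α))
    (ξ : Φ → ℕ → ℕ)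
    -- `α` is a positive root with `|ξ^α| > 0`
    (α : Φ) (hα : 0 < ∑ᶠ j, ξ α j)
    -- `s_α` is the number of nonzero parts of `ξ^α`
    (sα : ℕ) (hsα₂ : ∀ j, sα ≤ j → ξ α j = 0) :
    ∀ p, sα ≤ p → xt (em α) p • vXi ep em hc simple lam lamNat ξ = 0 := by
  intro p hp
  have hsα : 1 ≤ sα := by
    by_contra! h
    exact hα.ne' (finsum_eq_zero_of_forall_eq_zero fun j => hsα₂ j (by omega))
  have htail : tailSum (ξ α) sα = 0 := finsum_mem_of_eqOn_zero fun j hj => hsα₂ j hj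
  have hgen : (xt (ep α) 1 ^ p * xt (em α) 0 ^ (p + 1)) • vXi ep em hc simple lam lamNat ξ = 0 :=
    smul_vXi_eq_zero_of_smul_wLam_mem_xiGens
      ⟨α, p, 1, by omega, le_rfl, ⟨sα, hsα, by rw [htail]; omega⟩, rfl⟩
  obtain ⟨c, hc⟩ := Submodule.mem_span_singleton.1
    (F_smul_mem_span_singleton (𝕜 := ℝ) (isCurrentSl2HighestWeight_vXi (htriple α)) p)
  rw [← hc, neg_pow, mul_assoc, mul_smul, hgen, smul_zero, smul_zero]

/-- Corollary to Proposition `third`.  If `|ξ^α| > 0` and `s_α` is the number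
of nonzero parts of `ξ^α`, then `(x_α⁻ ⊗ t^p) v_ξ = 0` for all `p ≥ s_α`. -/
theorem xt_em_smul_vXi_eq_zero_of_numParts_le
    {L : Type} [LieRing L] [LieAlgebra ℂ L] {Φ ιI : Type}
    (ep em hc : Φ → L) (simple : ιI → Φ)
    (lam : Module.Dual ℂ L) (lamNat : Φ → ℕ)
    -- the elements `x_α⁺, x_α⁻, h_α` form an `sl₂`-triple for each positive root `α`
    (htriple : ∀ α, IsSl2Triple (hc α) (ep α) (em α))
    -- `λ(h_α) = lamNat α` is a non-negative integer for every `α ∈ R⁺`, i.e. `λ ∈ P⁺`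
    (hlam : ∀ α, lam (hc α) = (lamNat α : ℂ))
    -- `λ ≠ 0`
    (hlam_ne : lam ≠ 0)
    -- `ξ` is a `λ`-compatible tuple of partitions
    (ξ : Φ → ℕ → ℕ) (hcompat : IsCompatible lamNat ξ)
    -- `α` is a positive root with `|ξ^α| > 0`
    (α : Φ) (hα : 0 < ∑ᶠ j, ξ α j)
    -- `s_α` is the number of nonzero parts of `ξ^α`
    (sα : ℕ) (hsα₁ : ∀ j, j < sα → 0 < ξ α j) (hsα₂ : ∀ j, sα ≤ j → ξ α j = 0) :
    ∀ p, sα ≤ p → xt (em α) p • vXi ep em hc simple lam lamNat ξ = 0 :=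
  xt_em_smul_vXi_eq_zero_of_numParts_le_general ep em hc simple lam lamNat htriple ξ α hα sα hsα₂

end
end

section
/- Let ξ = (ξ_1 ≥ … ≥ ξ_ℓ > 0) be a partition with ℓ > 1 parts. Then 𝕀(ξ) is the disjoint union of 𝕀(ξ⁺) and the set 𝕀(ξ⁻; ξ_ℓ) = {(i_1, …, i_{ℓ−1}, ξ_ℓ) : (i_1, …, i_{ℓ−1}) ∈ 𝕀(ξ⁻)}, where 𝕀(ξ⁺) is regarded inside ℤ≥0^ℓ (padding tuples with trailing zeros if ξ⁺ has fewer than ℓ nonzero parts). -/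
noncomputable section

/-- `ξ` is (the function of `0`-based parts of) a partition with exactly `ℓ` nonzero parts
`ξ_1 ≥ ξ_2 ≥ ⋯ ≥ ξ_ℓ > 0`. -/
def IsPartitionOfLength (ℓ : ℕ) (ξ : ℕ → ℕ) : Prop :=
  Antitone ξ ∧ (∀ j, j < ℓ → 0 < ξ j) ∧ ∀ j, ℓ ≤ j → ξ j = 0

/-- The set `𝕀(ξ) ⊆ ℤ≥0^ℓ` of tuples `(i_1, …, i_ℓ)` (recorded as functions `i : ℕ → ℕ`
vanishing from index `ℓ` on, with `i_a = i (a−1)`) such that for all `2 ≤ k ≤ ℓ+1` and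
`1 ≤ j ≤ k−1` (with the convention `i_{ℓ+1} = 0`):
`j·i_{k−1} + (j+1)·i_k + 2·Σ_{p=k+1}^ℓ i_p ≤ Σ_{p=k−j}^ℓ ξ_p`. -/
def sl2Index (ℓ : ℕ) (ξ : ℕ → ℕ) : Set (ℕ → ℕ) :=
  {i | (∀ a, ℓ ≤ a → i a = 0) ∧
    ∀ k j : ℕ, 2 ≤ k → k ≤ ℓ + 1 → 1 ≤ j → j ≤ k - 1 →
      j * i (k - 2) + (j + 1) * i (k - 1) + 2 * ∑ p ∈ Finset.Icc (k + 1) ℓ, i (p - 1) ≤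
        ∑ p ∈ Finset.Icc (k - j) ℓ, ξ (p - 1)}

/-- The partition `ξ⁻ = (ξ_1, …, ξ_{ℓ−2}, ξ_{ℓ−1} − ξ_ℓ)` (in `0`-based indexing, with any
zero part simply recorded as the value `0`). -/
def ximinus (ℓ : ℕ) (ξ : ℕ → ℕ) : ℕ → ℕ := fun j =>
  if j + 2 < ℓ then ξ j else if j + 2 = ℓ then ξ j - ξ (j + 1) else 0

/-- `ℓ(ξ)`: the minimal `l` with `ξ_{l+1} = ξ_{ℓ−1}` (in `0`-based indexing, the minimal `l`
with `ξ l = ξ (ℓ−2)`). -/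
def lxi (ℓ : ℕ) (ξ : ℕ → ℕ) : ℕ := Nat.find (⟨ℓ - 2, rfl⟩ : ∃ l, ξ l = ξ (ℓ - 2))

/-- The partition `ξ⁺`, the decreasing rearrangement of
`(ξ_1, …, ξ_{ℓ−2}, ξ_{ℓ−1}+1, ξ_ℓ−1)`; explicitly `ξ⁺_j = ξ_j` for `j ≤ ℓ(ξ)`,
`ξ⁺_{ℓ(ξ)+1} = ξ_{ℓ−1}+1`, `ξ⁺_j = ξ_{ℓ−1}` for `ℓ(ξ)+2 ≤ j ≤ ℓ−1` and `ξ⁺_ℓ = ξ_ℓ − 1`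
(in `0`-based indexing). -/
def xiplus (ℓ : ℕ) (ξ : ℕ → ℕ) : ℕ → ℕ := fun j =>
  if j < lxi ℓ ξ then ξ j
  else if j = lxi ℓ ξ then ξ (ℓ - 2) + 1
  else if j + 1 < ℓ then ξ (ℓ - 2)
  else if j + 1 = ℓ then ξ (ℓ - 1) - 1
  else 0

namespace Sl2Proof

open Finset

lemma sum_shift (f : ℕ → ℕ) (a b : ℕ) :
    ∑ p ∈ Finset.Icc (a + 1) b, f (p - 1) = ∑ q ∈ Finset.Ico a b, f q := by
  rw [← Finset.Ico_add_one_right_eq_Icc, Finset.sum_Ico_eq_sum_range, Finset.sum_Ico_eq_sum_range,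
    show b + 1 - (a + 1) = b - a by omega]
  exact Finset.sum_congr rfl fun x _ => by congr 1; omega

/-- The defining conditions of `sl2Index`, reparametrized by `m = k - j - 1`, `j' = j - 1`. -/
lemma mem_iff {ℓ : ℕ} {ξ : ℕ → ℕ} (i : ℕ → ℕ) :
    i ∈ sl2Index ℓ ξ ↔ (∀ a, ℓ ≤ a → i a = 0) ∧
      ∀ m j : ℕ, m + j + 1 ≤ ℓ →
        (j + 1) * i (m + j) + (j + 2) * i (m + j + 1) +
            2 * ∑ q ∈ Finset.Ico (m + j + 2) ℓ, i q ≤ ∑ q ∈ Finset.Ico m ℓ, ξ q := by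
  constructor
  · rintro ⟨h0, h⟩
    refine ⟨h0, fun m j hmj => ?_⟩
    have h' := h (m + j + 2) (j + 1) (by omega) (by omega) (by omega) (by omega)
    rw [show m + j + 2 - 2 = m + j by omega, show m + j + 2 - 1 = m + j + 1 by omega,
      show m + j + 2 - (j + 1) = m + 1 by omega, sum_shift, sum_shift,
      show j + 1 + 1 = j + 2 by omega] at h'
    exact h'
  · rintro ⟨h0, h⟩
    refine ⟨h0, fun k j hk2 hk hj1 hj => ?_⟩
    have h' := h (k - j - 1) (j - 1) (by omega)
    rw [show k - j - 1 + (j - 1) + 2 = k by omega, show k - j - 1 + (j - 1) + 1 = k - 1 by omega,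
      show k - j - 1 + (j - 1) = k - 2 by omega, show j - 1 + 1 = j by omega,
      show j - 1 + 2 = j + 1 by omega] at h'
    rw [show k - j = k - j - 1 + 1 by omega, sum_shift, sum_shift]
    exact h'

section Main

variable {ℓ : ℕ} {ξ : ℕ → ℕ}

lemma lxi_le (hℓ : 1 < ℓ) : lxi ℓ ξ ≤ ℓ - 2 := by
  have h : ∀ H : ∃ l, ξ l = ξ (ℓ - 2), Nat.find H ≤ ℓ - 2 := fun H => Nat.find_min' H rfl
  exact h _

lemma lxi_eq (ℓ : ℕ) (ξ : ℕ → ℕ) : ξ (lxi ℓ ξ) = ξ (ℓ - 2) := by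
  have h : ∀ H : ∃ l, ξ l = ξ (ℓ - 2), ξ (Nat.find H) = ξ (ℓ - 2) := fun H => Nat.find_spec H
  exact h _

lemma xi_const (hξ : IsPartitionOfLength ℓ ξ) {q : ℕ} (h1 : lxi ℓ ξ ≤ q) (h2 : q ≤ ℓ - 2) :
    ξ q = ξ (ℓ - 2) :=
  le_antisymm (by rw [← lxi_eq ℓ ξ]; exact hξ.1 h1) (hξ.1 h2)

lemma sum_Ico_top {b : ℕ} (hb : 1 ≤ b) (f : ℕ → ℕ) (m : ℕ) (hm : m ≤ b - 1) :
    ∑ q ∈ Finset.Ico m b, f q = (∑ q ∈ Finset.Ico m (b - 1), f q) + f (b - 1) := by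
  conv_lhs => rw [show b = (b - 1) + 1 by omega]
  rw [Finset.sum_Ico_succ_top hm]

lemma xiplus_point (hℓ : 1 < ℓ) (hξ : IsPartitionOfLength ℓ ξ) (q : ℕ) (hq : q < ℓ) :
    xiplus ℓ ξ q + (if q = ℓ - 1 then 1 else 0) = ξ q + (if q = lxi ℓ ξ then 1 else 0) := by
  obtain ⟨hanti, hpos, hzero⟩ := hξ
  have hL : lxi ℓ ξ ≤ ℓ - 2 := lxi_le hℓ
  have hLe : ξ (lxi ℓ ξ) = ξ (ℓ - 2) := lxi_eq ℓ ξ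
  simp only [xiplus]
  rcases lt_trichotomy q (lxi ℓ ξ) with h | h | h
  · rw [if_pos h, if_neg (show ¬ q = ℓ - 1 by omega), if_neg (show ¬ q = lxi ℓ ξ by omega)]
  · rw [if_neg (by omega), if_pos h, if_neg (show ¬ q = ℓ - 1 by omega), if_pos h, h, hLe]
  · rw [if_neg (by omega), if_neg (by omega), if_neg (show ¬ q = lxi ℓ ξ by omega)]
    by_cases h2 : q ≤ ℓ - 2
    · rw [if_pos (by omega), if_neg (show ¬ q = ℓ - 1 by omega),
        xi_const ⟨hanti, hpos, hzero⟩ (le_of_lt h) h2]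
    · have hq1 : q = ℓ - 1 := by omega
      rw [if_neg (by omega), if_pos (by omega), if_pos hq1, hq1]
      have := hpos (ℓ - 1) (by omega)
      omega

lemma sum_xiplus (hℓ : 1 < ℓ) (hξ : IsPartitionOfLength ℓ ξ) (m : ℕ) :
    (∑ q ∈ Finset.Ico m ℓ, xiplus ℓ ξ q) + (if ℓ - 1 ∈ Finset.Ico m ℓ then 1 else 0)
      = (∑ q ∈ Finset.Ico m ℓ, ξ q) + (if lxi ℓ ξ ∈ Finset.Ico m ℓ then 1 else 0) := by
  have h : (∑ q ∈ Finset.Ico m ℓ, (xiplus ℓ ξ q + if q = ℓ - 1 then 1 else 0))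
      = ∑ q ∈ Finset.Ico m ℓ, (ξ q + if q = lxi ℓ ξ then 1 else 0) :=
    Finset.sum_congr rfl (fun q hq => xiplus_point hℓ hξ q (Finset.mem_Ico.mp hq).2)
  rw [Finset.sum_add_distrib, Finset.sum_add_distrib] at h
  have h1 : ∑ q ∈ Finset.Ico m ℓ, (if q = ℓ - 1 then (1:ℕ) else 0)
      = if ℓ - 1 ∈ Finset.Ico m ℓ then 1 else 0 := by simp
  have h2 : ∑ q ∈ Finset.Ico m ℓ, (if q = lxi ℓ ξ then (1:ℕ) else 0)
      = if lxi ℓ ξ ∈ Finset.Ico m ℓ then 1 else 0 := by simp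
  rw [h1, h2] at h
  exact h

lemma sum_xiplus_le (hℓ : 1 < ℓ) (hξ : IsPartitionOfLength ℓ ξ) (m : ℕ) :
    ∑ q ∈ Finset.Ico m ℓ, xiplus ℓ ξ q ≤ ∑ q ∈ Finset.Ico m ℓ, ξ q := by
  have h := sum_xiplus hℓ hξ m
  have hL : lxi ℓ ξ ≤ ℓ - 2 := lxi_le hℓ
  simp only [Finset.mem_Ico] at h
  split_ifs at h <;> omega

lemma sum_xiplus_eq_low (hℓ : 1 < ℓ) (hξ : IsPartitionOfLength ℓ ξ) (m : ℕ)
    (hm : m ≤ lxi ℓ ξ) :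
    ∑ q ∈ Finset.Ico m ℓ, xiplus ℓ ξ q = ∑ q ∈ Finset.Ico m ℓ, ξ q := by
  have h := sum_xiplus hℓ hξ m
  have hL : lxi ℓ ξ ≤ ℓ - 2 := lxi_le hℓ
  simp only [Finset.mem_Ico] at h
  split_ifs at h <;> omega

lemma sum_xiplus_eq_high (hℓ : 1 < ℓ) (hξ : IsPartitionOfLength ℓ ξ) (m : ℕ)
    (hm : lxi ℓ ξ < m) (hm2 : m ≤ ℓ - 1) :
    (∑ q ∈ Finset.Ico m ℓ, xiplus ℓ ξ q) + 1 = ∑ q ∈ Finset.Ico m ℓ, ξ q := by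
  have h := sum_xiplus hℓ hξ m
  simp only [Finset.mem_Ico] at h
  split_ifs at h <;> omega

lemma xi_sum_const (hℓ : 1 < ℓ) (hξ : IsPartitionOfLength ℓ ξ) (m b : ℕ)
    (hm : lxi ℓ ξ ≤ m) (hb : b ≤ ℓ - 1) :
    ∑ q ∈ Finset.Ico m b, ξ q = (b - m) * ξ (ℓ - 2) := by
  have h : ∀ q ∈ Finset.Ico m b, ξ q = ξ (ℓ - 2) := fun q hq =>
    xi_const hξ (le_trans hm (Finset.mem_Ico.mp hq).1)
      (by have := (Finset.mem_Ico.mp hq).2; omega)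
  rw [Finset.sum_congr rfl h, Finset.sum_const, Nat.card_Ico, smul_eq_mul]

lemma S_formula (hℓ : 1 < ℓ) (hξ : IsPartitionOfLength ℓ ξ) (m : ℕ)
    (hm : lxi ℓ ξ ≤ m) (hm2 : m ≤ ℓ - 1) :
    ∑ q ∈ Finset.Ico m ℓ, ξ q = (ℓ - 1 - m) * ξ (ℓ - 2) + ξ (ℓ - 1) := by
  rw [sum_Ico_top (by omega) ξ m hm2, xi_sum_const hℓ hξ m (ℓ - 1) hm (le_refl _)]

lemma sum_ximinus (hℓ : 1 < ℓ) (hξ : IsPartitionOfLength ℓ ξ) (m : ℕ) (hm : m ≤ ℓ - 2) :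
    (∑ q ∈ Finset.Ico m (ℓ - 1), ximinus ℓ ξ q) + 2 * ξ (ℓ - 1)
      = ∑ q ∈ Finset.Ico m ℓ, ξ q := by
  obtain ⟨hanti, hpos, hzero⟩ := hξ
  have key : ∀ q ∈ Finset.Ico m (ℓ - 1),
      ximinus ℓ ξ q + (if q = ℓ - 2 then ξ (ℓ - 1) else 0) = ξ q := by
    intro q hq
    rw [Finset.mem_Ico] at hq
    simp only [ximinus]
    by_cases h : q + 2 < ℓ
    · rw [if_pos h, if_neg (show ¬ q = ℓ - 2 by omega)]
      omega
    · have h2 : q + 2 = ℓ := by omega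
      rw [if_neg h, if_pos h2, if_pos (show q = ℓ - 2 by omega),
        show q + 1 = ℓ - 1 by omega]
      have hle : ξ (ℓ - 1) ≤ ξ q := hanti (by omega)
      omega
  have h := Finset.sum_congr rfl key
  rw [Finset.sum_add_distrib] at h
  have h1 : ∑ q ∈ Finset.Ico m (ℓ - 1), (if q = ℓ - 2 then ξ (ℓ - 1) else 0)
      = if ℓ - 2 ∈ Finset.Ico m (ℓ - 1) then ξ (ℓ - 1) else 0 := by simp
  rw [h1, if_pos (Finset.mem_Ico.mpr ⟨hm, by omega⟩)] at h
  have h2 : (∑ q ∈ Finset.Ico m (ℓ - 1), ximinus ℓ ξ q) + ξ (ℓ - 1)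
      = ∑ q ∈ Finset.Ico m (ℓ - 1), ξ q := h
  rw [sum_Ico_top (by omega) ξ m (by omega)]
  omega

lemma sum_lower (m b c : ℕ) (hc : ∀ q, q < b → c ≤ ξ q) :
    (b - m) * c ≤ ∑ q ∈ Finset.Ico m b, ξ q := by
  have h := Finset.card_nsmul_le_sum (Finset.Ico m b) ξ c
    (fun q hq => hc q (Finset.mem_Ico.mp hq).2)
  rwa [Nat.card_Ico, smul_eq_mul] at h

/-- Strictness: if `i ∈ 𝕀(ξ)` and `i_ℓ < ξ_ℓ`, then every constraint with `m > ℓ(ξ)` is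
strict. -/
lemma strict (hℓ : 1 < ℓ) (hξ : IsPartitionOfLength ℓ ξ) {i : ℕ → ℕ}
    (hz : ∀ a, ℓ ≤ a → i a = 0)
    (hc : ∀ m j : ℕ, m + j + 1 ≤ ℓ →
      (j + 1) * i (m + j) + (j + 2) * i (m + j + 1) +
          2 * ∑ q ∈ Finset.Ico (m + j + 2) ℓ, i q ≤ ∑ q ∈ Finset.Ico m ℓ, ξ q)
    (htop : i (ℓ - 1) + 1 ≤ ξ (ℓ - 1)) :
    ∀ n m j : ℕ, ℓ - (m + j + 1) ≤ n → m + j + 1 ≤ ℓ → lxi ℓ ξ + 1 ≤ m →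
      (j + 1) * i (m + j) + (j + 2) * i (m + j + 1) +
          2 * ∑ q ∈ Finset.Ico (m + j + 2) ℓ, i q + 1 ≤ ∑ q ∈ Finset.Ico m ℓ, ξ q := by
  have hanti := hξ.1
  have hL : lxi ℓ ξ ≤ ℓ - 2 := lxi_le hℓ
  have base : ∀ m j : ℕ, m + j + 1 = ℓ → lxi ℓ ξ + 1 ≤ m →
      (j + 1) * i (m + j) + (j + 2) * i (m + j + 1) +
          2 * ∑ q ∈ Finset.Ico (m + j + 2) ℓ, i q + 1 ≤ ∑ q ∈ Finset.Ico m ℓ, ξ q := by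
    intro m j hmj hm
    have hiz : i (m + j + 1) = 0 := hz _ (by omega)
    have hico : Finset.Ico (m + j + 2) ℓ = ∅ := Finset.Ico_eq_empty (by omega)
    rw [hiz, hico, Finset.sum_empty,
      S_formula hℓ hξ m (by omega) (by omega),
      show m + j = ℓ - 1 by omega, show ℓ - 1 - m = j by omega]
    obtain ⟨B', hB'⟩ : ∃ b, ξ (ℓ - 1) = b + 1 := ⟨ξ (ℓ - 1) - 1, by omega⟩
    have hiB : i (ℓ - 1) ≤ B' := by omega
    have hd : ξ (ℓ - 1) ≤ ξ (ℓ - 2) := hanti (by omega)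
    calc (j + 1) * i (ℓ - 1) + (j + 2) * 0 + 2 * 0 + 1
        = (j + 1) * i (ℓ - 1) + 1 := by ring
      _ ≤ (j + 1) * B' + 1 := by
          exact Nat.add_le_add_right (Nat.mul_le_mul_left _ hiB) 1
      _ = j * B' + (B' + 1) := by ring
      _ ≤ j * ξ (ℓ - 2) + (B' + 1) := by
          exact Nat.add_le_add_right (Nat.mul_le_mul_left _ (by omega)) _
      _ = j * ξ (ℓ - 2) + ξ (ℓ - 1) := by rw [hB']
  intro n
  induction n with
  | zero =>
    intro m j h1 h2 h3
    exact base m j (by omega) h3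
  | succ n ih =>
    intro m j h1 h2 h3
    by_cases hend : m + j + 1 = ℓ
    · exact base m j hend h3
    · have hmj2 : m + j + 2 ≤ ℓ := by omega
      have c0 := hc m j h2
      by_cases hstrict : (j + 1) * i (m + j) + (j + 2) * i (m + j + 1) +
          2 * ∑ q ∈ Finset.Ico (m + j + 2) ℓ, i q + 1 ≤ ∑ q ∈ Finset.Ico m ℓ, ξ q
      · exact hstrict
      · exfalso
        have hge : ∑ q ∈ Finset.Ico m ℓ, ξ q ≤ (j + 1) * i (m + j) + (j + 2) * i (m + j + 1) +
            2 * ∑ q ∈ Finset.Ico (m + j + 2) ℓ, i q :=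
          Nat.lt_succ_iff.mp (Nat.not_le.mp hstrict)
        have heq : (j + 1) * i (m + j) + (j + 2) * i (m + j + 1) +
            2 * ∑ q ∈ Finset.Ico (m + j + 2) ℓ, i q = ∑ q ∈ Finset.Ico m ℓ, ξ q :=
          le_antisymm c0 hge
        -- Step 1 : i (m+j) + i (m+j+1) ≤ ξ (ℓ - 2)
        have c1 := hc (lxi ℓ ξ) (m + j - lxi ℓ ξ) (by omega)
        rw [show lxi ℓ ξ + (m + j - lxi ℓ ξ) + 2 = m + j + 2 by omega,
          show lxi ℓ ξ + (m + j - lxi ℓ ξ) + 1 = m + j + 1 by omega,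
          show lxi ℓ ξ + (m + j - lxi ℓ ξ) = m + j by omega] at c1
        have hc1' : (m - lxi ℓ ξ) * (i (m + j) + i (m + j + 1)) +
            ((j + 1) * i (m + j) + (j + 2) * i (m + j + 1) +
              2 * ∑ q ∈ Finset.Ico (m + j + 2) ℓ, i q)
            = (m + j - lxi ℓ ξ + 1) * i (m + j) + (m + j - lxi ℓ ξ + 2) * i (m + j + 1) +
              2 * ∑ q ∈ Finset.Ico (m + j + 2) ℓ, i q := by
          rw [show m + j - lxi ℓ ξ + 1 = (m - lxi ℓ ξ) + (j + 1) by omega,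
            show m + j - lxi ℓ ξ + 2 = (m - lxi ℓ ξ) + (j + 2) by omega]
          ring
        rw [← hc1', heq] at c1
        have hSL : ∑ q ∈ Finset.Ico (lxi ℓ ξ) ℓ, ξ q
            = (m - lxi ℓ ξ) * ξ (ℓ - 2) + ∑ q ∈ Finset.Ico m ℓ, ξ q := by
          rw [← Finset.sum_Ico_consecutive ξ (show lxi ℓ ξ ≤ m by omega)
            (show m ≤ ℓ by omega), xi_sum_const hℓ hξ (lxi ℓ ξ) m (le_refl _) (by omega)]
        rw [hSL] at c1
        have hAB : i (m + j) + i (m + j + 1) ≤ ξ (ℓ - 2) := by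
          have h' : (m - lxi ℓ ξ) * (i (m + j) + i (m + j + 1))
              ≤ (m - lxi ℓ ξ) * ξ (ℓ - 2) := by omega
          exact Nat.le_of_mul_le_mul_left h' (by omega)
        -- Step 2 : strict inequality one level up
        have c2 := ih (m + j + 1) 0 (by omega) (by omega) (by omega)
        rw [show m + j + 1 + 0 + 2 = m + j + 3 by omega,
          show m + j + 1 + 0 + 1 = m + j + 2 by omega,
          show m + j + 1 + 0 = m + j + 1 by omega] at c2
        have hR : ∑ q ∈ Finset.Ico (m + j + 2) ℓ, i q
            = i (m + j + 2) + ∑ q ∈ Finset.Ico (m + j + 3) ℓ, i q := by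
          rcases Nat.lt_or_ge (m + j + 2) ℓ with hlt | hge
          · exact Finset.sum_eq_sum_Ico_succ_bot hlt i
          · rw [Finset.Ico_eq_empty (show ¬ (m + j + 2) < ℓ by omega),
              Finset.Ico_eq_empty (show ¬ (m + j + 3) < ℓ by omega),
              Finset.sum_empty, hz (m + j + 2) (by omega)]
            omega
        have t2 : i (m + j + 1) + 2 * ∑ q ∈ Finset.Ico (m + j + 2) ℓ, i q + 1
            ≤ ∑ q ∈ Finset.Ico (m + j + 1) ℓ, ξ q := by omega
        -- Step 3 : contradiction
        have t1 : (j + 1) * (i (m + j) + i (m + j + 1)) ≤ (j + 1) * ξ (ℓ - 2) :=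
          Nat.mul_le_mul_left _ hAB
        have e0 : (∑ q ∈ Finset.Ico m ℓ, ξ q) + 1
            = (j + 1) * (i (m + j) + i (m + j + 1)) +
              (i (m + j + 1) + 2 * ∑ q ∈ Finset.Ico (m + j + 2) ℓ, i q + 1) := by
          rw [← heq]; ring
        have e1 : (j + 1) * (i (m + j) + i (m + j + 1)) +
              (i (m + j + 1) + 2 * ∑ q ∈ Finset.Ico (m + j + 2) ℓ, i q + 1)
            ≤ (j + 1) * ξ (ℓ - 2) + ∑ q ∈ Finset.Ico (m + j + 1) ℓ, ξ q :=
          Nat.add_le_add t1 t2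
        have e2 : (j + 1) * ξ (ℓ - 2) + ∑ q ∈ Finset.Ico (m + j + 1) ℓ, ξ q
            = ∑ q ∈ Finset.Ico m ℓ, ξ q := by
          rw [S_formula hℓ hξ (m + j + 1) (by omega) (by omega),
            S_formula hℓ hξ m (by omega) (by omega), ← add_assoc, ← add_mul,
            show j + 1 + (ℓ - 1 - (m + j + 1)) = ℓ - 1 - m by omega]
        have : (∑ q ∈ Finset.Ico m ℓ, ξ q) + 1 ≤ ∑ q ∈ Finset.Ico m ℓ, ξ q := by
          rw [e0, ← e2]; exact e1
        omega

/-- `𝕀(ξ⁺) ⊆ 𝕀(ξ)`. -/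
lemma xiplus_subset (hℓ : 1 < ℓ) (hξ : IsPartitionOfLength ℓ ξ) {i : ℕ → ℕ}
    (hi : i ∈ sl2Index ℓ (xiplus ℓ ξ)) : i ∈ sl2Index ℓ ξ := by
  obtain ⟨hz, hc⟩ := (mem_iff i).mp hi
  exact (mem_iff i).mpr ⟨hz, fun m j hmj =>
    le_trans (hc m j hmj) (sum_xiplus_le hℓ hξ m)⟩

/-- If `i ∈ 𝕀(ξ)` and `i_ℓ < ξ_ℓ` then `i ∈ 𝕀(ξ⁺)`. -/
lemma mem_xiplus (hℓ : 1 < ℓ) (hξ : IsPartitionOfLength ℓ ξ) {i : ℕ → ℕ}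
    (hi : i ∈ sl2Index ℓ ξ) (htop : i (ℓ - 1) + 1 ≤ ξ (ℓ - 1)) :
    i ∈ sl2Index ℓ (xiplus ℓ ξ) := by
  obtain ⟨hz, hc⟩ := (mem_iff i).mp hi
  refine (mem_iff i).mpr ⟨hz, fun m j hmj => ?_⟩
  by_cases hm : m ≤ lxi ℓ ξ
  · rw [sum_xiplus_eq_low hℓ hξ m hm]
    exact hc m j hmj
  · have hT := sum_xiplus_eq_high hℓ hξ m (by omega) (by omega)
    have hs := strict hℓ hξ hz hc htop ℓ m j (by omega) hmj (by omega)
    rw [← hT] at hs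
    exact Nat.le_of_succ_le_succ hs

/-- If `i' ∈ 𝕀(ξ⁻)` then appending `ξ_ℓ` gives an element of `𝕀(ξ)`. -/
lemma update_mem (hℓ : 1 < ℓ) (hξ : IsPartitionOfLength ℓ ξ) {i' : ℕ → ℕ}
    (hi' : i' ∈ sl2Index (ℓ - 1) (ximinus ℓ ξ)) :
    Function.update i' (ℓ - 1) (ξ (ℓ - 1)) ∈ sl2Index ℓ ξ := by
  have hanti := hξ.1
  obtain ⟨hz', hc'⟩ := (mem_iff i').mp hi'
  set i := Function.update i' (ℓ - 1) (ξ (ℓ - 1)) with hidef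
  have hival : ∀ q, q ≠ ℓ - 1 → i q = i' q := fun q hq => Function.update_of_ne hq _ _
  have hitop : i (ℓ - 1) = ξ (ℓ - 1) := Function.update_self _ _ _
  refine (mem_iff i).mpr ⟨?_, ?_⟩
  · intro a ha
    rw [hival a (by omega)]
    exact hz' a (by omega)
  · intro m j hmj
    rcases show m + j + 1 ≤ ℓ - 2 ∨ m + j + 1 = ℓ - 1 ∨ m + j + 1 = ℓ by omega
      with h | h | h
    · -- low case: reduces to the ξ⁻ condition
      have e1 : i (m + j) = i' (m + j) := hival _ (by omega)
      have e2 : i (m + j + 1) = i' (m + j + 1) := hival _ (by omega)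
      have e3 : ∑ q ∈ Finset.Ico (m + j + 2) ℓ, i q
          = (∑ q ∈ Finset.Ico (m + j + 2) (ℓ - 1), i' q) + ξ (ℓ - 1) := by
        rw [sum_Ico_top (by omega) i (m + j + 2) (by omega), hitop]
        congr 1
        exact Finset.sum_congr rfl fun q hq =>
          hival q (by have := (Finset.mem_Ico.mp hq).2; omega)
      rw [e1, e2, e3]
      have hmin := hc' m j (by omega)
      have hS := sum_ximinus hℓ hξ m (by omega)
      have hrw : (j + 1) * i' (m + j) + (j + 2) * i' (m + j + 1) +
          2 * ((∑ q ∈ Finset.Ico (m + j + 2) (ℓ - 1), i' q) + ξ (ℓ - 1))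
          = ((j + 1) * i' (m + j) + (j + 2) * i' (m + j + 1) +
            2 * ∑ q ∈ Finset.Ico (m + j + 2) (ℓ - 1), i' q) + 2 * ξ (ℓ - 1) := by ring
      rw [hrw, ← hS]
      exact Nat.add_le_add_right hmin _
    · -- middle case: m + j = ℓ - 2
      rw [show m + j + 2 = ℓ by omega, show m + j + 1 = ℓ - 1 by omega,
        show m + j = ℓ - 2 by omega, Finset.Ico_self, Finset.sum_empty, hitop,
        hival (ℓ - 2) (by omega)]
      -- bound on i' (ℓ - 2)
      have hb := hc' (ℓ - 2) 0 (by omega)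
      rw [show ℓ - 2 + 0 + 2 = ℓ by omega, show ℓ - 2 + 0 + 1 = ℓ - 1 by omega,
        show ℓ - 2 + 0 = ℓ - 2 by omega] at hb
      have hico : Finset.Ico ℓ (ℓ - 1) = ∅ := Finset.Ico_eq_empty (by omega)
      have hsing : Finset.Ico (ℓ - 2) (ℓ - 1) = {ℓ - 2} := by
        rw [show ℓ - 1 = (ℓ - 2) + 1 by omega]
        exact Nat.Ico_succ_singleton (ℓ - 2)
      rw [hico, Finset.sum_empty, hz' (ℓ - 1) (le_refl _), hsing, Finset.sum_singleton] at hb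
      have hxm : ximinus ℓ ξ (ℓ - 2) = ξ (ℓ - 2) - ξ (ℓ - 1) := by
        simp only [ximinus]
        rw [if_neg (show ¬ ℓ - 2 + 2 < ℓ by omega), if_pos (show ℓ - 2 + 2 = ℓ by omega),
          show ℓ - 2 + 1 = ℓ - 1 by omega]
      rw [hxm] at hb
      have hd : ξ (ℓ - 1) ≤ ξ (ℓ - 2) := hanti (by omega)
      have hb2 : i' (ℓ - 2) + ξ (ℓ - 1) ≤ ξ (ℓ - 2) := by omega
      have hlow : (ℓ - 1 - m) * ξ (ℓ - 2) ≤ ∑ q ∈ Finset.Ico m (ℓ - 1), ξ q :=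
        sum_lower m (ℓ - 1) (ξ (ℓ - 2)) (fun q hq => hanti (by omega))
      rw [show ℓ - 1 - m = j + 1 by omega] at hlow
      rw [sum_Ico_top (by omega) ξ m (by omega)]
      calc (j + 1) * i' (ℓ - 2) + (j + 2) * ξ (ℓ - 1) + 2 * 0
          = (j + 1) * (i' (ℓ - 2) + ξ (ℓ - 1)) + ξ (ℓ - 1) := by ring
        _ ≤ (j + 1) * ξ (ℓ - 2) + ξ (ℓ - 1) :=
            Nat.add_le_add_right (Nat.mul_le_mul_left _ hb2) _
        _ ≤ (∑ q ∈ Finset.Ico m (ℓ - 1), ξ q) + ξ (ℓ - 1) := Nat.add_le_add_right hlow _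
    · -- top case: m + j + 1 = ℓ
      rw [show m + j + 2 = ℓ + 1 by omega, show m + j + 1 = ℓ by omega,
        show m + j = ℓ - 1 by omega, hitop]
      have hico : Finset.Ico (ℓ + 1) ℓ = ∅ := Finset.Ico_eq_empty (by omega)
      have hiz : i ℓ = 0 := by
        rw [hival ℓ (by omega)]
        exact hz' ℓ (by omega)
      rw [hico, Finset.sum_empty, hiz]
      have hlow : (ℓ - m) * ξ (ℓ - 1) ≤ ∑ q ∈ Finset.Ico m ℓ, ξ q :=
        sum_lower m ℓ (ξ (ℓ - 1)) (fun q hq => hanti (by omega))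
      rw [show ℓ - m = j + 1 by omega] at hlow
      calc (j + 1) * ξ (ℓ - 1) + (j + 2) * 0 + 2 * 0
          = (j + 1) * ξ (ℓ - 1) := by ring
        _ ≤ ∑ q ∈ Finset.Ico m ℓ, ξ q := hlow

/-- If `i ∈ 𝕀(ξ)` has `i_ℓ = ξ_ℓ`, then dropping the last entry gives an element of
`𝕀(ξ⁻)`. -/
lemma downdate_mem (hℓ : 1 < ℓ) (hξ : IsPartitionOfLength ℓ ξ) {i : ℕ → ℕ}
    (hi : i ∈ sl2Index ℓ ξ) (htop : i (ℓ - 1) = ξ (ℓ - 1)) :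
    Function.update i (ℓ - 1) 0 ∈ sl2Index (ℓ - 1) (ximinus ℓ ξ) := by
  obtain ⟨hz, hc⟩ := (mem_iff i).mp hi
  set i' := Function.update i (ℓ - 1) 0 with hidef
  have hival : ∀ q, q ≠ ℓ - 1 → i' q = i q := fun q hq => Function.update_of_ne hq _ _
  have hitop : i' (ℓ - 1) = 0 := Function.update_self _ _ _
  refine (mem_iff i').mpr ⟨?_, ?_⟩
  · intro a ha
    rcases eq_or_ne a (ℓ - 1) with rfl | h
    · exact hitop
    · rw [hival a h]
      exact hz a (by omega)
  · intro m j hmj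
    rcases show m + j + 1 ≤ ℓ - 2 ∨ m + j + 1 = ℓ - 1 by omega with h | h
    · have h0 := hc m j (by omega)
      have e3 : ∑ q ∈ Finset.Ico (m + j + 2) ℓ, i q
          = (∑ q ∈ Finset.Ico (m + j + 2) (ℓ - 1), i q) + ξ (ℓ - 1) := by
        rw [sum_Ico_top (by omega) i (m + j + 2) (by omega), htop]
      rw [e3] at h0
      have e1 : i' (m + j) = i (m + j) := hival _ (by omega)
      have e2 : i' (m + j + 1) = i (m + j + 1) := hival _ (by omega)
      have e4 : ∑ q ∈ Finset.Ico (m + j + 2) (ℓ - 1), i' q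
          = ∑ q ∈ Finset.Ico (m + j + 2) (ℓ - 1), i q :=
        Finset.sum_congr rfl fun q hq =>
          hival q (by have := (Finset.mem_Ico.mp hq).2; omega)
      rw [e1, e2, e4]
      have hS := sum_ximinus hℓ hξ m (by omega)
      have hrw : (j + 1) * i (m + j) + (j + 2) * i (m + j + 1) +
          2 * ((∑ q ∈ Finset.Ico (m + j + 2) (ℓ - 1), i q) + ξ (ℓ - 1))
          = ((j + 1) * i (m + j) + (j + 2) * i (m + j + 1) +
            2 * ∑ q ∈ Finset.Ico (m + j + 2) (ℓ - 1), i q) + 2 * ξ (ℓ - 1) := by ring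
      rw [hrw, ← hS] at h0
      exact Nat.le_of_add_le_add_right h0
    · -- top case for ξ⁻ : m + j = ℓ - 2
      have h0 := hc m j (by omega)
      rw [show m + j + 2 = ℓ by omega, show m + j + 1 = ℓ - 1 by omega,
        show m + j = ℓ - 2 by omega, Finset.Ico_self, Finset.sum_empty, htop] at h0
      have h2x : 2 * ξ (ℓ - 1) ≤ (j + 2) * ξ (ℓ - 1) :=
        Nat.mul_le_mul_right _ (by omega)
      have h0' : (j + 1) * i (ℓ - 2) + 2 * ξ (ℓ - 1) ≤ ∑ q ∈ Finset.Ico m ℓ, ξ q := by omega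
      rw [show m + j + 2 = ℓ by omega, show m + j + 1 = ℓ - 1 by omega,
        show m + j = ℓ - 2 by omega, hitop, hival (ℓ - 2) (by omega)]
      have hico : Finset.Ico ℓ (ℓ - 1) = ∅ := Finset.Ico_eq_empty (by omega)
      rw [hico, Finset.sum_empty]
      have hS := sum_ximinus hℓ hξ m (by omega)
      omega

end Main

end Sl2Proof

open Sl2Proof in
/-- Proposition `basissl2`.  For a partition `ξ = (ξ_1 ≥ ⋯ ≥ ξ_ℓ > 0)` with
`ℓ > 1` parts, `𝕀(ξ)` is the disjoint union of `𝕀(ξ⁺)` (regarded inside `ℤ≥0^ℓ`, padding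
tuples with trailing zeros) and the set
`𝕀(ξ⁻; ξ_ℓ) = {(i_1, …, i_{ℓ−1}, ξ_ℓ) : (i_1, …, i_{ℓ−1}) ∈ 𝕀(ξ⁻)}`. -/
theorem sl2Index_eq_disjoint_union
    (ℓ : ℕ) (hℓ : 1 < ℓ) (ξ : ℕ → ℕ) (hξ : IsPartitionOfLength ℓ ξ) :
    sl2Index ℓ ξ =
        sl2Index ℓ (xiplus ℓ ξ) ∪
          {i | ∃ i' ∈ sl2Index (ℓ - 1) (ximinus ℓ ξ),
            i = Function.update i' (ℓ - 1) (ξ (ℓ - 1))} ∧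
      Disjoint (sl2Index ℓ (xiplus ℓ ξ))
        {i | ∃ i' ∈ sl2Index (ℓ - 1) (ximinus ℓ ξ),
          i = Function.update i' (ℓ - 1) (ξ (ℓ - 1))} := by
  have hpos := hξ.2.1
  constructor
  · ext i
    simp only [Set.mem_union, Set.mem_setOf_eq]
    constructor
    · intro hi
      obtain ⟨hz, hc⟩ := (mem_iff i).mp hi
      have hle : i (ℓ - 1) ≤ ξ (ℓ - 1) := by
        have h0 := hc (ℓ - 1) 0 (by omega)
        rw [show ℓ - 1 + 0 + 2 = ℓ + 1 by omega, show ℓ - 1 + 0 + 1 = ℓ by omega,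
          show ℓ - 1 + 0 = ℓ - 1 by omega, Finset.Ico_eq_empty (show ¬ ℓ + 1 < ℓ by omega),
          Finset.sum_empty, hz ℓ (le_refl _),
          sum_Ico_top (by omega) ξ (ℓ - 1) (le_refl _), Finset.Ico_self,
          Finset.sum_empty] at h0
        omega
      by_cases htop : i (ℓ - 1) = ξ (ℓ - 1)
      · right
        refine ⟨Function.update i (ℓ - 1) 0, downdate_mem hℓ hξ hi htop, ?_⟩
        funext a
        rcases eq_or_ne a (ℓ - 1) with rfl | ha
        · rw [Function.update_self, htop]
        · rw [Function.update_of_ne ha, Function.update_of_ne ha]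
      · left
        exact mem_xiplus hℓ hξ hi (by omega)
    · rintro (h | ⟨i', hi', rfl⟩)
      · exact xiplus_subset hℓ hξ h
      · exact update_mem hℓ hξ hi'
  · rw [Set.disjoint_left]
    rintro i hi ⟨i', hi', rfl⟩
    obtain ⟨hz, hc⟩ := (mem_iff _).mp hi
    have h0 := hc (ℓ - 1) 0 (by omega)
    rw [show ℓ - 1 + 0 + 2 = ℓ + 1 by omega, show ℓ - 1 + 0 + 1 = ℓ by omega,
      show ℓ - 1 + 0 = ℓ - 1 by omega, Finset.Ico_eq_empty (show ¬ ℓ + 1 < ℓ by omega),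
      Finset.sum_empty, hz ℓ (le_refl _),
      sum_Ico_top (by omega) (xiplus ℓ ξ) (ℓ - 1) (le_refl _), Finset.Ico_self,
      Finset.sum_empty] at h0
    have hxp : xiplus ℓ ξ (ℓ - 1) = ξ (ℓ - 1) - 1 := by
      have hL : lxi ℓ ξ ≤ ℓ - 2 := lxi_le hℓ
      simp only [xiplus]
      rw [if_neg (by omega), if_neg (by omega), if_neg (by omega),
        if_pos (show ℓ - 1 + 1 = ℓ by omega)]
    rw [hxp, Function.update_self] at h0
    have := hpos (ℓ - 1) (by omega)
    omega

end
end
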